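/- arXiv:2208.03794 — 3 statements merged into one kernel-verified Lean document; each statement's English description precedes it below -/
import Mathlib

section
/- Let n ≥ 3 and 1 ≤ k ≤ n − 2 be integers, let λ ∈ Γ_k ⊂ ℝ^n, and let i ∈ {1,…,n}. Then S_k(λ|i)² / S_{k−1}(λ|i) ≥ ((k+1)/k) · ((n−k)/(n−k−1)) · S_{k+1}(λ|i). (Here S_{k−1}(λ|i) > 0 since λ ∈ Γ_k.) -/
open Finset

/-- `S_m(λ)`: the `m`-th elementary symmetric polynomial of `λ ∈ ℝⁿ`
(`S_0 = 1`, and `S_m = 0` when `m > n`). -/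
noncomputable def esymmS (n m : ℕ) (lam : Fin n → ℝ) : ℝ :=
  ∑ A ∈ Finset.univ.powersetCard m, ∏ j ∈ A, lam j

/-- `S_m(λ|i)`: `S_m` applied to the vector obtained from `λ` by deleting the `i`-th entry. -/
noncomputable def esymmSdel (n m : ℕ) (lam : Fin n → ℝ) (i : Fin n) : ℝ :=
  ∑ A ∈ (Finset.univ.erase i).powersetCard m, ∏ j ∈ A, lam j

/-- `S_m(λ|ij)`: `S_m` applied to the vector obtained from `λ` by deleting the
`i`-th and `j`-th entries. -/
noncomputable def esymmSdel2 (n m : ℕ) (lam : Fin n → ℝ) (i j : Fin n) : ℝ :=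
  ∑ A ∈ ((Finset.univ.erase i).erase j).powersetCard m, ∏ l ∈ A, lam l

/-- The Gårding cone `Γ_k = {λ : S_m(λ) > 0 for all 1 ≤ m ≤ k}`. -/
def GammaCone (n k : ℕ) : Set (Fin n → ℝ) :=
  {lam | ∀ m, 1 ≤ m → m ≤ k → 0 < esymmS n m lam}

/-- The closure of the Gårding cone: `{λ : S_m(λ) ≥ 0 for all 1 ≤ m ≤ k}`. -/
def GammaConeBar (n k : ℕ) : Set (Fin n → ℝ) :=
  {lam | ∀ m, 1 ≤ m → m ≤ k → 0 ≤ esymmS n m lam}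


section NewtonAux
open Polynomial
variable {ι : Type*} [DecidableEq ι]

lemma esymm_zero_of_card_lt {s : Multiset ℝ} {j : ℕ} (h : Multiset.card s < j) :
    s.esymm j = 0 := by
  rw [Multiset.esymm, Multiset.powersetCard_eq_empty _ h]; simp

/-- Derivative step: for a multiset `s` of reals of card `m ≥ 1`, there is a multiset `t`
of card `m - 1` with `m * esymm j t = (m - j) * esymm j s` for all `j`. -/
lemma exists_deriv_multiset (s : Multiset ℝ) (hm : 1 ≤ Multiset.card s) :
    ∃ t : Multiset ℝ, Multiset.card t = Multiset.card s - 1 ∧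
      ∀ j : ℕ, (Multiset.card s : ℝ) * t.esymm j = ((Multiset.card s : ℝ) - j) * s.esymm j := by
  classical
  set m := Multiset.card s with hmdef
  set P : ℝ[X] := (s.map fun t => X - C t).prod with hP
  have hPm : P.Monic := monic_multiset_prod_of_monic _ _ fun a _ => monic_X_sub_C a
  have hPdeg : P.natDegree = m := natDegree_multiset_prod_X_sub_C_eq_card s
  have hProots : P.roots = s := roots_multiset_prod_X_sub_C s
  have hd1 : (derivative P).natDegree ≤ m - 1 := by
    simpa [hPdeg] using natDegree_derivative_le P
  have h1 : m ≤ Multiset.card (derivative P).roots + 1 := by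
    have := P.card_roots_le_derivative
    rwa [hProots] at this
  have h2 : Multiset.card (derivative P).roots ≤ (derivative P).natDegree := card_roots' _
  have hcard : Multiset.card (derivative P).roots = (derivative P).natDegree := by omega
  have hdeg' : (derivative P).natDegree = m - 1 := by omega
  have hcard' : Multiset.card (derivative P).roots = m - 1 := by omega
  -- leading coefficient of derivative
  have hlc : (derivative P).leadingCoeff = (m : ℝ) := by
    rw [leadingCoeff, hdeg', coeff_derivative]
    have : m - 1 + 1 = m := by omega
    rw [this]
    have : P.coeff m = 1 := by rw [← hPdeg]; exact hPm.coeff_natDegree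
    rw [this, one_mul]
    push_cast [this]
    norm_cast
  refine ⟨(derivative P).roots, hcard', fun j => ?_⟩
  rcases le_or_gt j (m - 1) with hj | hj
  · -- main case
    have hk : m - 1 - j ≤ (derivative P).natDegree := by omega
    have e1 := Polynomial.coeff_eq_esymm_roots_of_card hcard (k := m - 1 - j) hk
    rw [hlc, hdeg'] at e1
    have hj' : m - 1 - (m - 1 - j) = j := by omega
    rw [hj'] at e1
    have hjm : j ≤ m := by omega
    have h5 : ((m - j : ℕ) : ℝ) = (m : ℝ) - j := by push_cast [hjm]; ring
    have e2 : (derivative P).coeff (m - 1 - j) = P.coeff (m - j) * ((m : ℝ) - j) := by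
      rw [coeff_derivative]
      have h3 : m - 1 - j + 1 = m - j := by omega
      have h6 : 1 ≤ m - j := by omega
      have h4 : ((m - 1 - j : ℕ) : ℝ) = (m : ℝ) - j - 1 := by
        have h7 : m - 1 - j = m - j - 1 := by omega
        rw [h7, Nat.cast_sub h6, h5]; norm_num
      rw [h3, h4]; ring
    have e3 : P.coeff (m - j) = (-1) ^ j * s.esymm j := by
      have hle : m - j ≤ Multiset.card s := by omega
      have h8 := Multiset.prod_X_sub_C_coeff s hle
      rw [← hmdef] at h8
      have hj'' : m - (m - j) = j := by omega
      rw [hj''] at h8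
      exact h8
    rw [e2, e3] at e1
    have hne : ((-1 : ℝ)) ^ j ≠ 0 := by positivity
    have e4 : ((-1:ℝ))^j * ((m:ℝ) * (derivative P).roots.esymm j)
        = ((-1:ℝ))^j * (((m:ℝ) - j) * s.esymm j) := by linear_combination -e1
    exact mul_left_cancel₀ hne e4
  · -- degenerate case
    have hz : (derivative P).roots.esymm j = 0 :=
      esymm_zero_of_card_lt (by omega)
    rw [hz, mul_zero]
    rcases eq_or_lt_of_le (show m ≤ j by omega) with hj2 | hj2
    · rw [← hj2]; ring
    · rw [esymm_zero_of_card_lt (show Multiset.card s < j by omega)]; ring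

/-- Iterated derivative step: normalized symmetric functions are preserved. -/
lemma exists_iter_multiset (s : Multiset ℝ) (d : ℕ) (hd : d ≤ Multiset.card s) :
    ∃ t : Multiset ℝ, Multiset.card t = Multiset.card s - d ∧
      ∀ j : ℕ, ((Multiset.card s).choose j : ℝ) * t.esymm j
        = ((Multiset.card s - d).choose j : ℝ) * s.esymm j := by
  induction d with
  | zero => exact ⟨s, by simp, fun j => by simp⟩
  | succ d ih =>
    obtain ⟨t, hct, hts⟩ := ih (by omega)
    set m := Multiset.card s
    set M := m - d with hM
    have hM1 : 1 ≤ M := by omega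
    have hct' : Multiset.card t = M := hct
    obtain ⟨u, hcu, hut⟩ := exists_deriv_multiset t (by omega)
    refine ⟨u, by omega, fun j => ?_⟩
    have hMd : m - (d + 1) = M - 1 := by omega
    rw [hMd]
    rcases le_or_gt j M with hjM | hjM
    · have key : (M : ℝ) * ((m.choose j : ℝ) * u.esymm j)
          = (M : ℝ) * (((M - 1).choose j : ℝ) * s.esymm j) := by
        have step := hut j
        rw [hct'] at step
        have hts' := hts j
        have hnat : (M - j) * M.choose j = M * (M - 1).choose j := by
          have := Nat.choose_mul_succ_eq (M - 1) j
          rw [Nat.sub_add_cancel hM1] at this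
          rw [mul_comm (M - j) (M.choose j), ← this, mul_comm]
        have hcast : ((M - j : ℕ) : ℝ) = (M : ℝ) - j := by push_cast [hjM]; ring
        have hnatR : ((M : ℝ) - j) * (M.choose j : ℝ) = (M : ℝ) * ((M - 1).choose j : ℝ) := by
          rw [← hcast]
          exact_mod_cast congrArg (fun x : ℕ => (x : ℝ)) hnat
        calc (M : ℝ) * ((m.choose j : ℝ) * u.esymm j)
            = (m.choose j : ℝ) * ((M : ℝ) * u.esymm j) := by ring
          _ = (m.choose j : ℝ) * (((M : ℝ) - j) * t.esymm j) := by rw [step]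
          _ = ((M : ℝ) - j) * ((m.choose j : ℝ) * t.esymm j) := by ring
          _ = ((M : ℝ) - j) * ((M.choose j : ℝ) * s.esymm j) := by rw [hM] at hts' ⊢; rw [hts']
          _ = (M : ℝ) * (((M - 1).choose j : ℝ) * s.esymm j) := by
              rw [← mul_assoc, hnatR, mul_assoc]
      have hMne : (M : ℝ) ≠ 0 := by positivity
      exact mul_left_cancel₀ hMne key
    · have h1 : u.esymm j = 0 := esymm_zero_of_card_lt (by omega)
      have h2 : (M - 1).choose j = 0 := Nat.choose_eq_zero_of_lt (by omega)
      rw [h1, h2]; simp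

variable {ι : Type*} [DecidableEq ι]

lemma sum_powersetCard_one (s : Finset ι) (g : ι → ℝ) :
    ∑ A ∈ s.powersetCard 1, ∏ i ∈ A, g i = ∑ i ∈ s, g i := by
  rw [powersetCard_one, sum_map]
  simp

lemma sum_powersetCard_two (s : Finset ι) (g : ι → ℝ) :
    2 * ∑ A ∈ s.powersetCard 2, ∏ i ∈ A, g i
      = (∑ i ∈ s, g i) ^ 2 - ∑ i ∈ s, (g i) ^ 2 := by
  classical
  induction s using Finset.induction with
  | empty =>
    rw [Finset.powersetCard_eq_empty.mpr (by simp)]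
    simp
  | insert _ _ hx => ?_
  rename_i x s ih
  rw [show (2 : ℕ) = Nat.succ 1 from rfl, powersetCard_succ_insert hx]
  have hdisj : Disjoint (s.powersetCard (Nat.succ 1)) ((s.powersetCard 1).image (insert x)) := by
    rw [Finset.disjoint_left]
    intro A hA hA'
    obtain ⟨B, hB, rfl⟩ := Finset.mem_image.mp hA'
    have hAx : x ∈ insert x B := Finset.mem_insert_self x B
    have : insert x B ⊆ s := (Finset.mem_powersetCard.mp hA).1
    exact hx (this hAx)
  rw [Finset.sum_union hdisj]
  have himg : ∑ A ∈ (s.powersetCard 1).image (insert x), ∏ i ∈ A, g i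
      = g x * ∑ i ∈ s, g i := by
    rw [Finset.sum_image]
    · rw [← sum_powersetCard_one s g, Finset.mul_sum]
      refine Finset.sum_congr rfl fun B hB => ?_
      have hBs : B ⊆ s := (Finset.mem_powersetCard.mp hB).1
      have hxB : x ∉ B := fun h => hx (hBs h)
      rw [Finset.prod_insert hxB]
    · intro B hB B' hB' hE
      have hBs : B ⊆ s := (Finset.mem_powersetCard.mp hB).1
      have hBs' : B' ⊆ s := (Finset.mem_powersetCard.mp hB').1
      have hxB : x ∉ B := fun h => hx (hBs h)
      have hxB' : x ∉ B' := fun h => hx (hBs' h)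
      rw [← Finset.erase_insert hxB, ← Finset.erase_insert hxB', hE]
  rw [Finset.sum_insert hx, Finset.sum_insert hx, mul_add, ih, himg]
  ring

lemma sum_powersetCard_compl (s : Finset ι) (f : ι → ℝ) (r : ℕ) (hr : r ≤ s.card) :
    ∑ A ∈ s.powersetCard (s.card - r), ∏ i ∈ A, f i
      = ∑ B ∈ s.powersetCard r, ∏ i ∈ s \ B, f i := by
  classical
  refine Finset.sum_nbij' (fun A => s \ A) (fun B => s \ B) ?_ ?_ ?_ ?_ ?_
  · intro A hA
    obtain ⟨hAs, hAc⟩ := Finset.mem_powersetCard.mp hA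
    refine Finset.mem_powersetCard.mpr ⟨Finset.sdiff_subset, ?_⟩
    rw [Finset.card_sdiff_of_subset hAs, hAc]
    omega
  · intro B hB
    obtain ⟨hBs, hBc⟩ := Finset.mem_powersetCard.mp hB
    refine Finset.mem_powersetCard.mpr ⟨Finset.sdiff_subset, ?_⟩
    rw [Finset.card_sdiff_of_subset hBs, hBc]
  · intro A hA
    exact Finset.sdiff_sdiff_eq_self (Finset.mem_powersetCard.mp hA).1
  · intro B hB
    exact Finset.sdiff_sdiff_eq_self (Finset.mem_powersetCard.mp hB).1
  · intro A hA
    rw [Finset.sdiff_sdiff_eq_self (Finset.mem_powersetCard.mp hA).1]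

lemma two_mul_choose_two (m : ℕ) : 2 * m.choose 2 = m * (m - 1) := by
  rw [Nat.choose_two_right]
  rcases m with _ | t
  · simp
  · have he : 2 ∣ (t + 1) * t := by
      rw [Nat.mul_comm]
      exact (Nat.even_mul_succ_self t).two_dvd
    simp only [Nat.add_sub_cancel]
    rw [Nat.mul_div_cancel' he]

/-- Newton's inequality, top case: `j + 1` variables, index `j`. -/
lemma newton_top (s : Finset ι) (f : ι → ℝ) (j : ℕ) (hj : 1 ≤ j) (hcard : s.card = j + 1) :
    (((j+1).choose (j-1) : ℝ)) * (∑ A ∈ s.powersetCard j, ∏ i ∈ A, f i) ^ 2 ≥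
      (((j+1).choose j : ℝ))^2 * (∑ A ∈ s.powersetCard (j-1), ∏ i ∈ A, f i) *
        (∑ A ∈ s.powersetCard (j+1), ∏ i ∈ A, f i) := by
  classical
  have htop : ∑ A ∈ s.powersetCard (j+1), ∏ i ∈ A, f i = ∏ i ∈ s, f i := by
    rw [← hcard, Finset.powersetCard_self, Finset.sum_singleton]
  by_cases hzero : ∃ i ∈ s, f i = 0
  · obtain ⟨i, his, hfi⟩ := hzero
    have : ∏ i ∈ s, f i = 0 := Finset.prod_eq_zero his hfi
    rw [htop, this, mul_zero]
    positivity
  · push_neg at hzero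
    set g : ι → ℝ := fun i => (f i)⁻¹ with hg
    set P : ℝ := ∏ i ∈ s, f i with hPdef
    have hsd : ∀ B ⊆ s, ∏ i ∈ s \ B, f i = P * ∏ i ∈ B, g i := by
      intro B hB
      have h1 : ∏ i ∈ B, f i ≠ 0 := Finset.prod_ne_zero_iff.mpr fun i hi => hzero i (hB hi)
      have h2 : (∏ i ∈ s \ B, f i) * ∏ i ∈ B, f i = P := Finset.prod_sdiff hB
      have h3 : ∏ i ∈ B, g i = (∏ i ∈ B, f i)⁻¹ := by
        rw [hg, ← Finset.prod_inv_distrib]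
      rw [h3]
      field_simp
      linear_combination h2
    have hEj : ∑ A ∈ s.powersetCard j, ∏ i ∈ A, f i = P * ∑ i ∈ s, g i := by
      have h4 : s.card - 1 = j := by omega
      rw [← h4, sum_powersetCard_compl s f 1 (by omega)]
      rw [← sum_powersetCard_one s g, Finset.mul_sum]
      refine Finset.sum_congr rfl fun B hB => hsd B (Finset.mem_powersetCard.mp hB).1
    have hEj1 : ∑ A ∈ s.powersetCard (j-1), ∏ i ∈ A, f i
        = P * ∑ B ∈ s.powersetCard 2, ∏ i ∈ B, g i := by
      have h4 : s.card - 2 = j - 1 := by omega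
      rw [← h4, sum_powersetCard_compl s f 2 (by omega), Finset.mul_sum]
      refine Finset.sum_congr rfl fun B hB => hsd B (Finset.mem_powersetCard.mp hB).1
    set T1 : ℝ := ∑ i ∈ s, g i with hT1
    set T2 : ℝ := ∑ B ∈ s.powersetCard 2, ∏ i ∈ B, g i with hT2
    set Q : ℝ := ∑ i ∈ s, (g i) ^ 2 with hQ
    have h2T2 : 2 * T2 = T1 ^ 2 - Q := sum_powersetCard_two s g
    have hCS : T1 ^ 2 ≤ (j + 1 : ℝ) * Q := by
      have := sq_sum_le_card_mul_sum_sq (s := s) (f := g)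
      rw [hcard] at this
      exact_mod_cast this
    have hc1 : ((j+1).choose (j-1) : ℝ) * 2 = (j + 1 : ℝ) * j := by
      have hs : (j+1).choose (j-1) = (j+1).choose 2 := by
        have h11 : j - 1 = (j+1) - 2 := by omega
        rw [h11, Nat.choose_symm (by omega : 2 ≤ j + 1)]
      rw [hs]
      have h9 : 2 * (j+1).choose 2 = (j+1) * j := by
        rw [two_mul_choose_two]
        norm_num
      have h10 := congrArg (fun x : ℕ => (x : ℝ)) h9
      push_cast at h10
      linarith [h10]
    have hc2 : ((j+1).choose j : ℝ) = (j + 1 : ℝ) := by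
      rw [Nat.choose_succ_self_right]
      push_cast
      ring
    -- key scalar inequality
    have hkey : 0 ≤ ((j+1).choose (j-1) : ℝ) * T1 ^ 2 - ((j+1 : ℝ))^2 * T2 := by
      nlinarith [hCS, h2T2, hc1, sq_nonneg T1, Nat.one_le_iff_ne_zero.mp hj]
    rw [hEj, hEj1, htop, hc2]
    nlinarith [mul_nonneg (sq_nonneg P) hkey]

lemma card_supersets (s B : Finset ι) (hB : B ⊆ s) (m : ℕ) (hm : B.card ≤ m) :
    ((s.powersetCard m).filter (fun A => B ⊆ A)).card
      = (s.card - B.card).choose (m - B.card) := by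
  classical
  rw [← Finset.card_sdiff_of_subset hB, ← Finset.card_powersetCard]
  refine Finset.card_nbij' (fun A => A \ B) (fun C => C ∪ B) ?_ ?_ ?_ ?_
  · intro A hA
    obtain ⟨hA1, hA2⟩ := Finset.mem_filter.mp hA
    obtain ⟨hAs, hAc⟩ := Finset.mem_powersetCard.mp hA1
    refine Finset.mem_powersetCard.mpr ⟨Finset.sdiff_subset_sdiff hAs (le_refl B), ?_⟩
    rw [Finset.card_sdiff_of_subset hA2, hAc]
  · intro C hC
    obtain ⟨hCs, hCc⟩ := Finset.mem_powersetCard.mp hC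
    have hdisj : Disjoint C B := Finset.disjoint_of_subset_left hCs Finset.sdiff_disjoint
    refine Finset.mem_filter.mpr ⟨Finset.mem_powersetCard.mpr ⟨?_, ?_⟩, Finset.subset_union_right⟩
    · exact Finset.union_subset (hCs.trans Finset.sdiff_subset) hB
    · rw [Finset.card_union_of_disjoint hdisj, hCc]
      omega
  · intro A hA
    exact Finset.sdiff_union_of_subset (Finset.mem_filter.mp hA).2
  · intro C hC
    have hCs := (Finset.mem_powersetCard.mp hC).1
    have hdisj : Disjoint C B := Finset.disjoint_of_subset_left hCs Finset.sdiff_disjoint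
    show (C ∪ B) \ B = C
    rw [Finset.union_sdiff_distrib, Finset.sdiff_self, Finset.union_empty,
      Finset.sdiff_eq_self_of_disjoint hdisj]

lemma prod_add_const (A : Finset ι) (f : ι → ℝ) (t : ℝ) :
    ∏ i ∈ A, (f i + t) = ∑ B ∈ A.powerset, (∏ i ∈ B, f i) * t ^ (A.card - B.card) := by
  rw [Finset.prod_add]
  exact Finset.sum_congr rfl fun B hB => by
    rw [Finset.prod_const, Finset.card_sdiff_of_subset (Finset.mem_powerset.mp hB)]

/-- Shift identity: elementary symmetric sums of `f + t`. -/
lemma sum_powersetCard_shift (s : Finset ι) (f : ι → ℝ) (t : ℝ) (m : ℕ) (hm : m ≤ s.card) :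
    ∑ A ∈ s.powersetCard m, ∏ i ∈ A, (f i + t)
      = ∑ j ∈ Finset.range (m + 1),
          ((s.card - j).choose (m - j) : ℝ) * (∑ B ∈ s.powersetCard j, ∏ i ∈ B, f i)
            * t ^ (m - j) := by
  classical
  have step1 : ∑ A ∈ s.powersetCard m, ∏ i ∈ A, (f i + t)
      = ∑ A ∈ s.powersetCard m, ∑ B ∈ A.powerset, (∏ i ∈ B, f i) * t ^ (m - B.card) := by
    refine Finset.sum_congr rfl fun A hA => ?_
    rw [prod_add_const A f t, (Finset.mem_powersetCard.mp hA).2]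
  rw [step1]
  have step2 : ∑ A ∈ s.powersetCard m, ∑ B ∈ A.powerset, (∏ i ∈ B, f i) * t ^ (m - B.card)
      = ∑ B ∈ s.powerset, ∑ A ∈ (s.powersetCard m).filter (fun A => B ⊆ A),
          (∏ i ∈ B, f i) * t ^ (m - B.card) := by
    refine Finset.sum_comm' ?_
    intro A B
    simp only [Finset.mem_powersetCard, Finset.mem_powerset, Finset.mem_filter]
    constructor
    · rintro ⟨⟨hAs, hAc⟩, hBA⟩
      exact ⟨⟨⟨hAs, hAc⟩, hBA⟩, hBA.trans hAs⟩
    · rintro ⟨⟨⟨hAs, hAc⟩, hBA⟩, _⟩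
      exact ⟨⟨hAs, hAc⟩, hBA⟩
  rw [step2]
  have step3 : ∑ B ∈ s.powerset, ∑ A ∈ (s.powersetCard m).filter (fun A => B ⊆ A),
          (∏ i ∈ B, f i) * t ^ (m - B.card)
      = ∑ B ∈ s.powerset,
          (((s.powersetCard m).filter (fun A => B ⊆ A)).card : ℝ)
            * ((∏ i ∈ B, f i) * t ^ (m - B.card)) := by
    refine Finset.sum_congr rfl fun B hB => ?_
    rw [Finset.sum_const, nsmul_eq_mul]
  rw [step3]
  rw [Finset.powerset_card_disjiUnion]; erw [Finset.sum_disjiUnion]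
  have hvan : ∀ j ∈ Finset.range (s.card + 1), j ∉ Finset.range (m + 1) →
      (∑ B ∈ s.powersetCard j,
        (((s.powersetCard m).filter (fun A => B ⊆ A)).card : ℝ)
          * ((∏ i ∈ B, f i) * t ^ (m - B.card))) = 0 := by
    intro j hj hnj
    have hjm : m < j := by
      simp only [Finset.mem_range] at hj hnj
      omega
    refine Finset.sum_eq_zero fun B hB => ?_
    obtain ⟨hBs, hBc⟩ := Finset.mem_powersetCard.mp hB
    have hemp : (s.powersetCard m).filter (fun A => B ⊆ A) = ∅ := by
      refine Finset.filter_eq_empty_iff.mpr fun {A} hA => ?_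
      obtain ⟨hAs, hAc⟩ := Finset.mem_powersetCard.mp hA
      intro hBA
      have := Finset.card_le_card hBA
      omega
    rw [hemp]
    simp
  rw [← Finset.sum_subset (Finset.range_subset_range.mpr (by omega) :
      Finset.range (m + 1) ⊆ Finset.range (s.card + 1)) hvan]
  refine Finset.sum_congr rfl fun j hj => ?_
  have hjm : j ≤ m := by
    have := Finset.mem_range.mp hj
    omega
  rw [Finset.mul_sum, Finset.sum_mul]
  refine Finset.sum_congr rfl fun B hB => ?_
  obtain ⟨hBs, hBc⟩ := Finset.mem_powersetCard.mp hB
  rw [card_supersets s B hBs m (by omega), hBc]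
  ring

/-- Newton's inequality, top case, multiset version. -/
lemma newton_top_multiset (t : Multiset ℝ) (j : ℕ) (hj : 1 ≤ j)
    (hcard : Multiset.card t = j + 1) :
    (((j+1).choose (j-1) : ℝ)) * (t.esymm j) ^ 2 ≥
      (((j+1).choose j : ℝ))^2 * t.esymm (j-1) * t.esymm (j+1) := by
  set l : List ℝ := t.toList with hl
  have hlt : (l : Multiset ℝ) = t := Multiset.coe_toList t
  have hrep : ∀ r : ℕ, t.esymm r
      = ∑ A ∈ (Finset.univ : Finset (Fin l.length)).powersetCard r, ∏ i ∈ A, l.get i := by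
    intro r
    have h1 : (Finset.univ : Finset (Fin l.length)).val.map l.get = t := by
      rw [Fin.univ_val_map, List.ofFn_get]
      exact hlt
    rw [← h1, Finset.esymm_map_val]
  have hlen : (Finset.univ : Finset (Fin l.length)).card = j + 1 := by
    rw [Finset.card_univ, Fintype.card_fin, Multiset.length_toList, hcard]
  have := newton_top (Finset.univ : Finset (Fin l.length)) l.get j hj hlen
  rw [hrep j, hrep (j-1), hrep (j+1)]
  exact this

/-- Newton's inequality for multisets of reals, in binomial-coefficient form. -/
lemma newton_multiset (s : Multiset ℝ) (j : ℕ) (hj : 1 ≤ j)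
    (hjc : j + 1 ≤ Multiset.card s) :
    ((Multiset.card s).choose (j-1) : ℝ) * ((Multiset.card s).choose (j+1) : ℝ)
        * (s.esymm j) ^ 2
      ≥ ((Multiset.card s).choose j : ℝ)^2 * s.esymm (j-1) * s.esymm (j+1) := by
  classical
  set m := Multiset.card s with hm
  obtain ⟨t, hct, hts⟩ := exists_iter_multiset s (m - (j+1)) (by omega)
  have hct' : Multiset.card t = j + 1 := by omega
  have top := newton_top_multiset t j hj hct'
  have hmj : m - (m - (j + 1)) = j + 1 := by omega
  -- abbreviations
  set a : ℝ := (m.choose (j-1) : ℝ) with ha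
  set b : ℝ := (m.choose j : ℝ) with hb
  set c : ℝ := (m.choose (j+1) : ℝ) with hc
  set A : ℝ := ((j+1).choose (j-1) : ℝ) with hA
  set B : ℝ := ((j+1).choose j : ℝ) with hB
  have e1 : a * t.esymm (j-1) = A * s.esymm (j-1) := by
    have := hts (j-1); rw [hmj] at this; exact this
  have e2 : b * t.esymm j = B * s.esymm j := by
    have := hts j; rw [hmj] at this; exact this
  have e3 : c * t.esymm (j+1) = s.esymm (j+1) := by
    have := hts (j+1); rw [hmj] at this; simpa using this
  have hapos : 0 < a := by
    rw [ha]; exact_mod_cast Nat.choose_pos (show j - 1 ≤ m by omega)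
  have hbpos : 0 < b := by
    rw [hb]; exact_mod_cast Nat.choose_pos (show j ≤ m by omega)
  have hcpos : 0 < c := by
    rw [hc]; exact_mod_cast Nat.choose_pos (show j + 1 ≤ m by omega)
  have hApos : 0 < A := by
    rw [hA]; exact_mod_cast Nat.choose_pos (show j - 1 ≤ j + 1 by omega)
  have hBpos : 0 < B := by
    rw [hB]; exact_mod_cast Nat.choose_pos (show j ≤ j + 1 by omega)
  set t1 := t.esymm (j-1)
  set t2 := t.esymm j
  set t3 := t.esymm (j+1)
  set s1 := s.esymm (j-1)
  set s2 := s.esymm j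
  set s3 := s.esymm (j+1)
  have key : A * B^2 * (a * c * s2^2) ≥ A * B^2 * (b^2 * s1 * s3) := by
    have h1 : A * B^2 * (a * c * s2^2) = a * c * A * (b * t2)^2 := by
      have h0 : (b * t2)^2 = (B * s2)^2 := by rw [e2]
      linear_combination (-(a*c*A)) * h0
    have h2 : a * c * b^2 * (B^2 * (t1 * t3)) = A * B^2 * (b^2 * s1 * s3) := by
      calc a * c * b^2 * (B^2 * (t1 * t3)) = b^2 * B^2 * (a * t1) * (c * t3) := by ring
        _ = b^2 * B^2 * (A * s1) * s3 := by rw [e1, e3]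
        _ = A * B^2 * (b^2 * s1 * s3) := by ring
    have h3 : a * c * b^2 * (A * t2^2) ≥ a * c * b^2 * (B^2 * (t1 * t3)) := by
      have hpos : 0 ≤ a * c * b^2 := by positivity
      have := mul_le_mul_of_nonneg_left (show B^2 * t1 * t3 ≤ A * t2^2 from top) hpos
      calc a * c * b^2 * (A * t2^2) ≥ a * c * b^2 * (B^2 * t1 * t3) := by linarith [this]
        _ = a * c * b^2 * (B^2 * (t1 * t3)) := by ring
    calc A * B^2 * (a * c * s2^2) = a * c * A * (b * t2)^2 := h1
      _ = a * c * b^2 * (A * t2^2) := by ring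
      _ ≥ a * c * b^2 * (B^2 * (t1 * t3)) := h3
      _ = A * B^2 * (b^2 * s1 * s3) := h2
  have hABpos : 0 < A * B^2 := by positivity
  exact le_of_mul_le_mul_left (by linarith [key]) hABpos


lemma sum_powersetCard_insert (x : ι) (s : Finset ι) (hx : x ∉ s) (f : ι → ℝ) (m : ℕ) :
    ∑ A ∈ (insert x s).powersetCard (m+1), ∏ i ∈ A, f i
      = (∑ A ∈ s.powersetCard (m+1), ∏ i ∈ A, f i)
        + f x * ∑ A ∈ s.powersetCard m, ∏ i ∈ A, f i := by
  classical
  rw [show m + 1 = Nat.succ m from rfl, Finset.powersetCard_succ_insert hx]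
  have hdisj : Disjoint (s.powersetCard (Nat.succ m)) ((s.powersetCard m).image (insert x)) := by
    rw [Finset.disjoint_left]
    intro A hA hA'
    obtain ⟨B, hB, rfl⟩ := Finset.mem_image.mp hA'
    have : insert x B ⊆ s := (Finset.mem_powersetCard.mp hA).1
    exact hx (this (Finset.mem_insert_self x B))
  rw [Finset.sum_union hdisj]
  congr 1
  rw [Finset.sum_image, Finset.mul_sum]
  · refine Finset.sum_congr rfl fun B hB => ?_
    have hBs : B ⊆ s := (Finset.mem_powersetCard.mp hB).1
    have hxB : x ∉ B := fun h => hx (hBs h)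
    rw [Finset.prod_insert hxB]
  · intro B hB B' hB' hE
    have hBs : B ⊆ s := (Finset.mem_powersetCard.mp hB).1
    have hBs' : B' ⊆ s := (Finset.mem_powersetCard.mp hB').1
    have hxB : x ∉ B := fun h => hx (hBs h)
    have hxB' : x ∉ B' := fun h => hx (hBs' h)
    rw [← Finset.erase_insert hxB, ← Finset.erase_insert hxB', hE]

/-- Splitting off the `i`-th variable. -/
lemma esymmS_split (n m : ℕ) (lam : Fin n → ℝ) (i : Fin n) :
    esymmS n (m+1) lam = esymmSdel n (m+1) lam i + lam i * esymmSdel n m lam i := by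
  have h : (Finset.univ : Finset (Fin n)) = insert i (Finset.univ.erase i) :=
    (Finset.insert_erase (Finset.mem_univ i)).symm
  show ∑ A ∈ (Finset.univ : Finset (Fin n)).powersetCard (m+1), ∏ j ∈ A, lam j = _
  rw [h, sum_powersetCard_insert i _ (Finset.notMem_erase i _) lam m]
  rfl

lemma esymmSdel_zero (n : ℕ) (lam : Fin n → ℝ) (i : Fin n) : esymmSdel n 0 lam i = 1 := by
  show ∑ A ∈ _, _ = (1:ℝ)
  rw [Finset.powersetCard_zero, Finset.sum_singleton, Finset.prod_empty]

lemma esymmS_nonneg_of_gamma {n k : ℕ} {lam : Fin n → ℝ} (hlam : lam ∈ GammaCone n k)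
    {j : ℕ} (hj : j ≤ k) : 0 ≤ esymmS n j lam := by
  rcases Nat.eq_zero_or_pos j with rfl | hj0
  · show (0:ℝ) ≤ ∑ A ∈ _, _
    rw [Finset.powersetCard_zero, Finset.sum_singleton, Finset.prod_empty]
    norm_num
  · exact (hlam j hj0 hj).le

/-- The Gårding cone is stable under adding a nonnegative constant to all entries. -/
lemma GammaCone_shift {n k : ℕ} (hk : k ≤ n) {lam : Fin n → ℝ} (hlam : lam ∈ GammaCone n k)
    {t : ℝ} (ht : 0 ≤ t) : (fun x => lam x + t) ∈ GammaCone n k := by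
  intro m hm1 hmk
  have hcard : (Finset.univ : Finset (Fin n)).card = n := by
    rw [Finset.card_univ, Fintype.card_fin]
  show (0:ℝ) < ∑ A ∈ (Finset.univ : Finset (Fin n)).powersetCard m, ∏ j ∈ A, (lam j + t)
  rw [sum_powersetCard_shift _ lam t m (by omega)]
  refine Finset.sum_pos' (fun j hj => ?_) ⟨m, Finset.self_mem_range_succ m, ?_⟩
  · have hjm : j ≤ m := by
      have := Finset.mem_range.mp hj
      omega
    have h1 : (0:ℝ) ≤ ∑ B ∈ (Finset.univ : Finset (Fin n)).powersetCard j, ∏ i ∈ B, lam i :=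
      esymmS_nonneg_of_gamma hlam (by omega)
    have h2 : (0:ℝ) ≤ t ^ (m - j) := by positivity
    positivity
  · rw [hcard]
    have h3 : (0:ℝ) < ∑ B ∈ (Finset.univ : Finset (Fin n)).powersetCard m, ∏ i ∈ B, lam i :=
      hlam m hm1 hmk
    simp only [Nat.sub_self, Nat.choose_zero_right, Nat.cast_one, one_mul, pow_zero, mul_one]
    exact h3

lemma esymmSdel_eq_esymm (n m : ℕ) (lam : Fin n → ℝ) (i : Fin n) :
    esymmSdel n m lam i = ((Finset.univ.erase i).val.map lam).esymm m :=
  (Finset.esymm_map_val lam _ m).symm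

lemma card_erase_univ {n : ℕ} (lam : Fin n → ℝ) (i : Fin n) :
    Multiset.card ((Finset.univ.erase i).val.map lam) = n - 1 := by
  rw [Multiset.card_map, Finset.card_val, Finset.card_erase_of_mem (Finset.mem_univ i),
    Finset.card_univ, Fintype.card_fin]

lemma GammaCone_mono {n k : ℕ} {lam : Fin n → ℝ} (h : lam ∈ GammaCone n (k+1)) :
    lam ∈ GammaCone n k := fun m hm1 hmk => h m hm1 (by omega)

/-- Key positivity: for `lam ∈ Γ_k` (with `k + 1 ≤ n`) we have `S_{k-1}(lam|i) > 0`. -/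
lemma esymmSdel_pos (n : ℕ) :
    ∀ k : ℕ, 1 ≤ k → k + 1 ≤ n → ∀ lam ∈ GammaCone n k, ∀ i : Fin n,
      0 < esymmSdel n (k-1) lam i := by
  intro k hk1
  induction k, hk1 using Nat.le_induction with
  | base =>
    intro _ lam _ i
    rw [esymmSdel_zero]
    norm_num
  | succ k hk1 ih =>
    intro hkn lam hlam i
    have hkn' : k + 1 ≤ n := by omega
    simp only [Nat.add_sub_cancel]
    -- the function g
    set T : ℝ := 1 + ∑ x : Fin n, |lam x| with hT
    set g : ℝ → ℝ := fun t => ∑ A ∈ (Finset.univ.erase i).powersetCard k,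
      ∏ j ∈ A, (lam j + t) with hg
    have hgdel : ∀ t : ℝ, g t = esymmSdel n k (fun x => lam x + t) i := fun t => rfl
    have hT0 : (0:ℝ) ≤ T := by
      have : (0:ℝ) ≤ ∑ x : Fin n, |lam x| := Finset.sum_nonneg fun x _ => abs_nonneg _
      linarith
    have hcont : Continuous g := by
      apply continuous_finset_sum
      intro A _
      apply continuous_finset_prod
      intro j _
      exact continuous_const.add continuous_id
    have hcarde : (Finset.univ.erase i).card = n - 1 := by
      rw [Finset.card_erase_of_mem (Finset.mem_univ i), Finset.card_univ, Fintype.card_fin]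
    have hgT : 0 < g T := by
      rw [hg]
      refine Finset.sum_pos (fun A hA => Finset.prod_pos fun j hj => ?_) ?_
      · have habs : |lam j| ≤ ∑ x : Fin n, |lam x| :=
          Finset.single_le_sum (fun x _ => abs_nonneg (lam x)) (Finset.mem_univ j)
        have : -lam j ≤ |lam j| := neg_le_abs _
        rw [hT]
        linarith
      · apply Finset.nonempty_iff_ne_empty.mpr
        intro hemp
        have := Finset.powersetCard_eq_empty.mp hemp
        omega
    have hne : ∀ t, 0 ≤ t → g t ≠ 0 := by
      intro t ht hg0
      set mu : Fin n → ℝ := fun x => lam x + t with hmu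
      have hmuG : mu ∈ GammaCone n (k+1) := GammaCone_shift (by omega) hlam ht
      -- IH positivity for mu
      have hpos2 : 0 < esymmSdel n (k-1) mu i :=
        ih hkn' mu (GammaCone_mono hmuG) i
      -- top symmetric function of mu|i is positive
      have hsplit := esymmS_split n k mu i
      have hS : esymmSdel n k mu i = 0 := by rw [← hgdel t]; exact hg0
      have htot : 0 < esymmS n (k+1) mu := hmuG (k+1) (by omega) (le_refl _)
      have hpos3 : 0 < esymmSdel n (k+1) mu i := by
        rw [hsplit, hS, mul_zero, add_zero] at htot
        exact htot
      -- Newton's inequality gives a contradiction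
      have hnewton := newton_multiset ((Finset.univ.erase i).val.map mu) k hk1
        (by rw [card_erase_univ]; omega)
      rw [card_erase_univ] at hnewton
      rw [← esymmSdel_eq_esymm, ← esymmSdel_eq_esymm, ← esymmSdel_eq_esymm, hS] at hnewton
      have hb : (0:ℝ) < ((n-1).choose k : ℝ) := by
        exact_mod_cast Nat.choose_pos (show k ≤ n - 1 by omega)
      have h9 : (0:ℝ) ≥ ((n-1).choose k : ℝ)^2 * esymmSdel n (k-1) mu i
          * esymmSdel n (k+1) mu i := by simpa using hnewton
      nlinarith [mul_pos (mul_pos (pow_pos hb 2) hpos2) hpos3]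
    -- intermediate value argument
    have hg0ne : g 0 ≠ 0 := hne 0 (le_refl 0)
    by_contra hcon
    push_neg at hcon
    have hg0lt : g 0 < 0 := by
      have : g 0 = esymmSdel n k lam i := by
        rw [hgdel 0]
        congr 1
        funext x
        simp
      rw [this]
      rcases lt_or_eq_of_le hcon with h | h
      · exact h
      · exact absurd (this.trans h) hg0ne
    have hIVT := intermediate_value_Icc hT0 hcont.continuousOn
    have h0mem : (0:ℝ) ∈ Set.Icc (g 0) (g T) := ⟨hg0lt.le, hgT.le⟩
    obtain ⟨t, ht, hgt⟩ := hIVT h0mem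
    exact hne t ht.1 hgt

end NewtonAux

/-- For `n ≥ 3`, `1 ≤ k ≤ n − 2`, `lam ∈ Γ_k` and an index `i`,
`S_k(lam|i)^2 / S_{k−1}(lam|i) ≥ ((k+1)/k)·((n−k)/(n−k−1))·S_{k+1}(lam|i)`. -/
theorem esymmSdel_newton_ineq (n k : ℕ) (hn : 3 ≤ n) (hk1 : 1 ≤ k) (hk : k + 2 ≤ n)
    (lam : Fin n → ℝ) (hlam : lam ∈ GammaCone n k) (i : Fin n) :
    esymmSdel n k lam i ^ 2 / esymmSdel n (k - 1) lam i ≥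
      (((k : ℝ) + 1) / k) * (((n : ℝ) - k) / ((n : ℝ) - k - 1)) *
        esymmSdel n (k + 1) lam i := by
  classical
  have hD : 0 < esymmSdel n (k-1) lam i := esymmSdel_pos n k hk1 (by omega) lam hlam i
  have hnewton := newton_multiset ((Finset.univ.erase i).val.map lam) k hk1
    (by rw [card_erase_univ]; omega)
  rw [card_erase_univ, ← esymmSdel_eq_esymm, ← esymmSdel_eq_esymm,
    ← esymmSdel_eq_esymm] at hnewton
  set a : ℝ := ((n-1).choose (k-1) : ℝ) with ha
  set b : ℝ := ((n-1).choose k : ℝ) with hb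
  set c : ℝ := ((n-1).choose (k+1) : ℝ) with hc
  set S0 : ℝ := esymmSdel n (k-1) lam i
  set S1 : ℝ := esymmSdel n k lam i
  set S2 : ℝ := esymmSdel n (k+1) lam i
  have hapos : 0 < a := by
    rw [ha]; exact_mod_cast Nat.choose_pos (show k - 1 ≤ n - 1 by omega)
  have hbpos : 0 < b := by
    rw [hb]; exact_mod_cast Nat.choose_pos (show k ≤ n - 1 by omega)
  have hcpos : 0 < c := by
    rw [hc]; exact_mod_cast Nat.choose_pos (show k + 1 ≤ n - 1 by omega)
  have hk0 : (0:ℝ) < (k:ℝ) := by exact_mod_cast hk1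
  have hkn : (k:ℝ) + 2 ≤ (n:ℝ) := by exact_mod_cast hk
  have hnk : (0:ℝ) < (n:ℝ) - k := by linarith
  have hnk1 : (0:ℝ) < (n:ℝ) - k - 1 := by linarith
  have A1 : b * k = a * ((n:ℝ) - k) := by
    have h := Nat.choose_succ_right_eq (n-1) (k-1)
    have hrw1 : k - 1 + 1 = k := by omega
    have hrw2 : n - 1 - (k - 1) = n - k := by omega
    rw [hrw1, hrw2] at h
    have h2 := congrArg (fun x : ℕ => (x:ℝ)) h
    push_cast [Nat.cast_sub (show k ≤ n by omega)] at h2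
    rw [ha, hb]
    convert h2 using 2 <;> push_cast <;> ring
  have A2 : c * ((k:ℝ) + 1) = b * ((n:ℝ) - 1 - k) := by
    have h := Nat.choose_succ_right_eq (n-1) k
    have h2 := congrArg (fun x : ℕ => (x:ℝ)) h
    have hrw : n - 1 - k = n - (k+1) := by omega
    rw [hrw] at h
    have h3 := congrArg (fun x : ℕ => (x:ℝ)) h
    push_cast [Nat.cast_sub (show k + 1 ≤ n by omega)] at h3
    rw [hb, hc]
    convert h3 using 2 <;> push_cast <;> ring
  have E' : ((k:ℝ)+1) * (((n:ℝ)-k) * (a*c)) = b^2 * (k * ((n:ℝ)-k-1)) := by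
    linear_combination (b*(k:ℝ)) * A2 - (c*((k:ℝ)+1)) * A1
  rw [ge_iff_le, le_div_iff₀ hD]
  have hac : 0 < a * c := by positivity
  refine le_of_mul_le_mul_left ?_ hac
  have heq : a * c * (((k:ℝ) + 1) / k * (((n:ℝ) - k) / ((n:ℝ) - k - 1)) * S2 * S0)
      = b^2 * S0 * S2 := by
    field_simp
    linear_combination S2 * E'
  rw [heq]
  linarith [hnewton]
end

section
/- Let n ≥ 2 and 1 ≤ k ≤ n be integers, let λ ∈ Γ_k ⊂ ℝ^n, and let i ∈ {1,…,n}. Then S_k(λ|i) / S_{k−1}(λ|i) ≤ (1/k) · ((n−k)/(n−1)) · S_1(λ|i). (Here S_{k−1}(λ|i) > 0 since λ ∈ Γ_k.) -/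
open Finset

namespace MacAux

open Multiset Polynomial

open Multiset Polynomial

lemma esymm_zero' (s : Multiset ℝ) : s.esymm 0 = 1 := by
  simp [Multiset.esymm]

lemma esymm_cons (a : ℝ) (s : Multiset ℝ) (j : ℕ) :
    (a ::ₘ s).esymm (j + 1) = s.esymm (j + 1) + a * s.esymm j := by
  simp only [Multiset.esymm, Multiset.powersetCard_cons, Multiset.map_add, Multiset.sum_add,
    Multiset.map_map, Function.comp_def]
  congr 1
  rw [← Multiset.sum_map_mul_left]
  congr 1
  exact Multiset.map_congr rfl fun t _ => by rw [Multiset.prod_cons]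

lemma esymm_of_card_lt {s : Multiset ℝ} {j : ℕ} (h : Multiset.card s < j) : s.esymm j = 0 := by
  rw [Multiset.esymm, Multiset.powersetCard_eq_empty _ h]
  simp

lemma esymm_card (s : Multiset ℝ) : s.esymm (Multiset.card s) = s.prod := by
  induction s using Multiset.induction with
  | empty => simp [esymm_zero']
  | cons a s ih =>
    rw [Multiset.card_cons, esymm_cons, esymm_of_card_lt (by simp), ih, Multiset.prod_cons]
    ring

lemma esymm_one' (s : Multiset ℝ) : s.esymm 1 = s.sum := by
  rw [Multiset.esymm, Multiset.powersetCard_one, Multiset.map_map]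
  simp [Function.comp_def]

lemma esymm_reciprocal (s : Multiset ℝ) (h : ∀ x ∈ s, x ≠ 0) :
    ∀ a b : ℕ, a + b = Multiset.card s →
      s.esymm a = s.prod * (s.map (·⁻¹)).esymm b := by
  induction s using Multiset.induction with
  | empty =>
    intro a b hab
    simp only [Multiset.card_zero] at hab
    obtain ⟨rfl, rfl⟩ : a = 0 ∧ b = 0 := by omega
    simp [esymm_zero']
  | cons x s ih =>
    intro a b hab
    have hx : x ≠ 0 := h x (Multiset.mem_cons_self x s)
    have hs : ∀ y ∈ s, y ≠ 0 := fun y hy => h y (Multiset.mem_cons_of_mem hy)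
    have hprod : s.prod ≠ 0 := by
      intro h0
      exact hs 0 (Multiset.prod_eq_zero_iff.mp h0) rfl
    rw [Multiset.card_cons] at hab
    match a, b, hab with
    | 0, b, hab =>
      have hb : b = Multiset.card s + 1 := by omega
      subst hb
      rw [esymm_zero', Multiset.map_cons, Multiset.prod_cons]
      have h3 : (s.map (·⁻¹)).esymm (Multiset.card s) = s.prod⁻¹ := by
        rw [show Multiset.card s = Multiset.card (s.map (·⁻¹)) by simp, esymm_card]
        simpa using Multiset.prod_map_inv (m := s) (f := id)
      rw [esymm_cons, esymm_of_card_lt (by simp), h3]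
      field_simp
      ring
    | a + 1, 0, hab =>
      have ha : a + 1 = Multiset.card s + 1 := by omega
      rw [ha, ← Multiset.card_cons x s, esymm_card, esymm_zero']
      ring
    | a + 1, b + 1, hab =>
      have h1 : (a + 1) + b = Multiset.card s := by omega
      have h2 : a + (b + 1) = Multiset.card s := by omega
      rw [esymm_cons, Multiset.map_cons, Multiset.prod_cons, esymm_cons,
        ih hs (a + 1) b h1, ih hs a (b + 1) h2]
      field_simp
      ring
open Multiset Polynomial

lemma sq_sum_expand (s : Multiset ℝ) :
    s.sum ^ 2 = (s.map (· ^ 2)).sum + 2 * s.esymm 2 := by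
  induction s using Multiset.induction with
  | empty => simp [esymm_of_card_lt (by simp : Multiset.card (0 : Multiset ℝ) < 2)]
  | cons a s ih =>
    rw [Multiset.sum_cons, Multiset.map_cons, Multiset.sum_cons,
      show (2 : ℕ) = 1 + 1 from rfl, esymm_cons, esymm_one']
    ring_nf
    ring_nf at ih
    nlinarith [ih]

lemma cs_sum (s : Multiset ℝ) :
    s.sum ^ 2 ≤ (Multiset.card s : ℝ) * (s.map (· ^ 2)).sum := by
  induction s using Multiset.induction with
  | empty => simp
  | cons a s ih =>
    rw [Multiset.sum_cons, Multiset.map_cons, Multiset.sum_cons, Multiset.card_cons]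
    push_cast
    have hc : (0 : ℝ) ≤ (Multiset.card s : ℝ) := Nat.cast_nonneg _
    have hQ : (0 : ℝ) ≤ (s.map (· ^ 2)).sum := by
      apply Multiset.sum_nonneg
      intro x hx
      obtain ⟨y, _, rfl⟩ := Multiset.mem_map.mp hx
      positivity
    rcases eq_or_lt_of_le hc with hc0 | hcpos
    · have : s = 0 := by
        rwa [eq_comm, Nat.cast_eq_zero, Multiset.card_eq_zero] at hc0
      subst this; simp
    · nlinarith [ih, sq_nonneg ((Multiset.card s : ℝ) * a - s.sum), hQ]

lemma top_newton (u : Multiset ℝ) (M : ℕ) (hM : 2 ≤ M) (hcard : Multiset.card u = M) :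
    2 * (M : ℝ) * (u.esymm (M - 2) * u.esymm M) ≤ ((M : ℝ) - 1) * (u.esymm (M - 1)) ^ 2 := by
  by_cases hprod : u.prod = 0
  · have h0 : u.esymm M = 0 := by rw [← hcard, esymm_card]; exact hprod
    rw [h0]
    have : (1 : ℝ) ≤ (M : ℝ) := by exact_mod_cast Nat.one_le_of_lt hM
    nlinarith [sq_nonneg (u.esymm (M - 1))]
  · have hne : ∀ x ∈ u, x ≠ 0 := by
      intro x hx h0
      exact hprod (Multiset.prod_eq_zero (h0 ▸ hx))
    set ν := u.map (·⁻¹) with hν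
    have r2 : u.esymm (M - 2) = u.prod * ν.esymm 2 :=
      esymm_reciprocal u hne (M - 2) 2 (by omega)
    have r1 : u.esymm (M - 1) = u.prod * ν.esymm 1 :=
      esymm_reciprocal u hne (M - 1) 1 (by omega)
    have r0 : u.esymm M = u.prod * ν.esymm 0 :=
      esymm_reciprocal u hne M 0 (by omega)
    have hcardν : Multiset.card ν = M := by simp [hν, hcard]
    have key : 2 * (M : ℝ) * ν.esymm 2 ≤ ((M : ℝ) - 1) * (ν.esymm 1) ^ 2 := by
      have h7 : ν.sum ^ 2 = (ν.map (· ^ 2)).sum + 2 * ν.esymm 2 := sq_sum_expand ν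
      have h8 : ν.sum ^ 2 ≤ (M : ℝ) * (ν.map (· ^ 2)).sum := by
        rw [← hcardν]; exact cs_sum ν
      have h7M : (M : ℝ) * ν.sum ^ 2 = (M : ℝ) * (ν.map (· ^ 2)).sum
          + 2 * (M : ℝ) * ν.esymm 2 := by rw [h7]; ring
      rw [esymm_one']
      linarith [h7M, h8, h7]
    rw [r2, r1, r0, esymm_zero']
    have h2 := mul_le_mul_of_nonneg_left key (sq_nonneg u.prod)
    nlinarith [h2]
open Multiset Polynomial

/-- nat lemma: A₁ = (d+1) A₀ -/
lemma descFac_succ_self (d : ℕ) : (d + 1).descFactorial d = (d + 1) * d.descFactorial d := by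
  have := Nat.succ_descFactorial d d
  simpa using this

/-- nat lemma: 2 A₂ = (d+2) A₁ -/
lemma two_descFac (d : ℕ) : 2 * (d + 2).descFactorial d = (d + 2) * (d + 1).descFactorial d := by
  have := Nat.succ_descFactorial (d + 1) d
  have h2 : d + 1 + 1 - d = 2 := by omega
  rw [h2] at this
  simpa [show d + 1 + 1 = d + 2 from rfl] using this

lemma roots_card_iterate (p : ℝ[X]) (h : Multiset.card p.roots = p.natDegree) (d : ℕ) :
    p.natDegree ≤ Multiset.card ((derivative^[d]) p).roots + d := by
  induction d with
  | zero => simpa using h.ge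
  | succ d ih =>
    have := Polynomial.card_roots_le_derivative ((derivative^[d]) p)
    rw [Function.iterate_succ_apply']
    omega

lemma natDegree_iterate_le (p : ℝ[X]) (d : ℕ) :
    ((derivative^[d]) p).natDegree ≤ p.natDegree - d := by
  induction d with
  | zero => simp
  | succ d ih =>
    rw [Function.iterate_succ_apply']
    have := Polynomial.natDegree_derivative_le ((derivative^[d]) p)
    omega

theorem newton_ineq (t : Multiset ℝ) (m : ℕ) (hm : 1 ≤ m) (hmc : m + 1 ≤ Multiset.card t) :
    ((m : ℝ) + 1) * ((Multiset.card t : ℝ) - m + 1) * (t.esymm (m - 1) * t.esymm (m + 1)) ≤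
      (m : ℝ) * ((Multiset.card t : ℝ) - m) * (t.esymm m) ^ 2 := by
  set N := Multiset.card t with hN
  set d := N - m - 1 with hd
  have hdN : m + 1 + d = N := by omega
  set p : ℝ[X] := (t.map fun r => X + C r).prod with hp
  have hp_eq : p = ((t.map Neg.neg).map fun a => X - C a).prod := by
    rw [hp, Multiset.map_map]
    congr 1
    exact Multiset.map_congr rfl fun r _ => by simp [sub_neg_eq_add]
  have hproots : p.roots = t.map Neg.neg := by
    rw [hp_eq, Polynomial.roots_multiset_prod_X_sub_C]
  have hpdeg : p.natDegree = N := by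
    rw [hp_eq, Polynomial.natDegree_multiset_prod_X_sub_C_eq_card, Multiset.card_map]
  have hpcard : Multiset.card p.roots = p.natDegree := by
    rw [hproots, Multiset.card_map, hpdeg]
  have hpmonic : p.Monic := by
    apply Polynomial.monic_multiset_prod_of_monic
    intro r _
    exact Polynomial.monic_X_add_C r
  set q : ℝ[X] := (derivative^[d]) p with hq
  have hqdeg_le : q.natDegree ≤ N - d := by
    have := natDegree_iterate_le p d; rwa [hpdeg] at this
  have hqroots_ge : N ≤ Multiset.card q.roots + d := by
    have := roots_card_iterate p hpcard d; rwa [hpdeg] at this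
  have hqroots_card : Multiset.card q.roots = m + 1 := by
    have h1 : Multiset.card q.roots ≤ q.natDegree := Polynomial.card_roots' q
    omega
  have hqdeg : q.natDegree = m + 1 := by
    have h1 : Multiset.card q.roots ≤ q.natDegree := Polynomial.card_roots' q
    omega
  -- coefficients of q in terms of esymm of t
  have hcoeff : ∀ j, j ≤ m + 1 → q.coeff j = ((j + d).descFactorial d : ℝ) * t.esymm (m + 1 - j) := by
    intro j hj
    rw [hq, Polynomial.coeff_iterate_derivative, nsmul_eq_mul]
    congr 1
    have hjd : j + d ≤ Multiset.card t := by omega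
    rw [hp, Multiset.prod_X_add_C_coeff t hjd]
    congr 1
    omega
  -- q is a product of linear factors
  have hfact : C q.leadingCoeff * (q.roots.map fun a => X - C a).prod = q :=
    Polynomial.C_leadingCoeff_mul_prod_multiset_X_sub_C (hqroots_card.trans hqdeg.symm)
  have hcpos : 0 < q.leadingCoeff := by
    have h1 : q.leadingCoeff = q.coeff (m + 1) := by rw [Polynomial.leadingCoeff, hqdeg]
    rw [h1, hcoeff (m + 1) le_rfl, Nat.sub_self, esymm_zero', mul_one]
    have hne : (m + 1 + d).descFactorial d ≠ 0 := by
      simp only [Ne, Nat.descFactorial_eq_zero_iff_lt]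
      omega
    have : 0 < (m + 1 + d).descFactorial d := Nat.pos_of_ne_zero hne
    exact_mod_cast this
  -- coefficients of q in terms of esymm of roots
  have hcoeff2 : ∀ j, j ≤ m + 1 →
      q.coeff j = q.leadingCoeff * ((-1) ^ (m + 1 - j) * q.roots.esymm (m + 1 - j)) := by
    intro j hj
    conv_lhs => rw [← hfact]
    rw [Polynomial.coeff_C_mul,
      Multiset.prod_X_sub_C_coeff q.roots (by omega : j ≤ Multiset.card q.roots), hqroots_card]
  set c := q.leadingCoeff with hc
  set u := q.roots with hu
  set A0 : ℝ := ((d.descFactorial d : ℕ) : ℝ) with hA0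
  set A1 : ℝ := (((d + 1).descFactorial d : ℕ) : ℝ) with hA1
  set A2 : ℝ := (((d + 2).descFactorial d : ℕ) : ℝ) with hA2
  have e0 : c * ((-1) ^ (m + 1) * u.esymm (m + 1)) = A0 * t.esymm (m + 1) := by
    have h := ((hcoeff 0 (by omega)).symm.trans (hcoeff2 0 (by omega))).symm
    simpa using h
  have e1 : c * ((-1) ^ m * u.esymm m) = A1 * t.esymm m := by
    have h := ((hcoeff 1 (by omega)).symm.trans (hcoeff2 1 (by omega))).symm
    rw [Nat.add_comm 1 d] at h
    simpa using h
  have e2 : c * ((-1) ^ (m - 1) * u.esymm (m - 1)) = A2 * t.esymm (m - 1) := by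
    have h := ((hcoeff 2 (by omega)).symm.trans (hcoeff2 2 (by omega))).symm
    rw [Nat.add_comm 2 d] at h
    have h' : m + 1 - 2 = m - 1 := by omega
    rw [h'] at h
    exact h
  have hA0pos : 0 < A0 := by
    have hne : d.descFactorial d ≠ 0 := by
      simp only [Ne, Nat.descFactorial_eq_zero_iff_lt]; omega
    rw [hA0]
    exact_mod_cast Nat.pos_of_ne_zero hne
  have hA1pos : 0 < A1 := by
    have hne : (d + 1).descFactorial d ≠ 0 := by
      simp only [Ne, Nat.descFactorial_eq_zero_iff_lt]; omega
    rw [hA1]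
    exact_mod_cast Nat.pos_of_ne_zero hne
  have hA1A0 : A1 = ((d : ℝ) + 1) * A0 := by
    have h := descFac_succ_self d
    rw [hA1, hA0]
    exact_mod_cast congrArg (Nat.cast : ℕ → ℝ) h
  have hA2A1 : 2 * A2 = ((d : ℝ) + 2) * A1 := by
    have h := two_descFac d
    rw [hA2, hA1]
    exact_mod_cast congrArg (Nat.cast : ℕ → ℝ) h
  -- top newton on u
  have htop : 2 * ((m : ℝ) + 1) * (u.esymm (m - 1) * u.esymm (m + 1)) ≤ (m : ℝ) * (u.esymm m) ^ 2 := by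
    have h := top_newton u (m + 1) (by omega) hqroots_card
    have h1 : m + 1 - 2 = m - 1 := by omega
    have h2 : m + 1 - 1 = m := by omega
    rw [h1, h2] at h
    push_cast at h ⊢
    linarith
  have hmul := mul_le_mul_of_nonneg_left htop (sq_nonneg c)
  have key2 : c ^ 2 * (u.esymm (m - 1) * u.esymm (m + 1))
      = A2 * t.esymm (m - 1) * (A0 * t.esymm (m + 1)) := by
    have hmm : (-1 : ℝ) ^ (m - 1) * (-1 : ℝ) ^ (m + 1) = 1 := by
      rw [← pow_add]
      have h' : m - 1 + (m + 1) = 2 * m := by omega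
      rw [h', pow_mul]
      norm_num
    calc c ^ 2 * (u.esymm (m - 1) * u.esymm (m + 1))
        = ((-1 : ℝ) ^ (m - 1) * (-1 : ℝ) ^ (m + 1)) * (c ^ 2 * (u.esymm (m - 1) * u.esymm (m + 1))) := by
          rw [hmm, one_mul]
      _ = (c * ((-1) ^ (m - 1) * u.esymm (m - 1))) * (c * ((-1) ^ (m + 1) * u.esymm (m + 1))) := by
          ring
      _ = A2 * t.esymm (m - 1) * (A0 * t.esymm (m + 1)) := by rw [e2, e0]
  have key1 : c ^ 2 * (u.esymm m) ^ 2 = (A1 * t.esymm m) ^ 2 := by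
    have hsq : ((-1 : ℝ) ^ m) ^ 2 = 1 := by
      rw [← pow_mul, mul_comm, pow_mul]; norm_num
    calc c ^ 2 * (u.esymm m) ^ 2
        = ((-1 : ℝ) ^ m) ^ 2 * (c ^ 2 * (u.esymm m) ^ 2) := by rw [hsq, one_mul]
      _ = (c * ((-1) ^ m * u.esymm m)) ^ 2 := by ring
      _ = (A1 * t.esymm m) ^ 2 := by rw [e1]
  rw [show c ^ 2 * ((m : ℝ) * u.esymm m ^ 2) = (m : ℝ) * (c ^ 2 * (u.esymm m) ^ 2) by ring] at hmul
  rw [show c ^ 2 * (2 * ((m : ℝ) + 1) * (u.esymm (m - 1) * u.esymm (m + 1)))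
      = 2 * ((m : ℝ) + 1) * (c ^ 2 * (u.esymm (m - 1) * u.esymm (m + 1))) by ring] at hmul
  rw [key2, key1] at hmul
  -- final arithmetic
  have hNd : (N : ℝ) = (m : ℝ) + 1 + (d : ℝ) := by exact_mod_cast congrArg (Nat.cast : ℕ → ℝ) hdN.symm
  rw [hNd]
  have l1 : (((m : ℝ) + 1) * ((m : ℝ) + 1 + (d : ℝ) - m + 1) * (t.esymm (m - 1) * t.esymm (m + 1))) * (A0 * A1)
      = 2 * ((m : ℝ) + 1) * (A2 * t.esymm (m - 1) * (A0 * t.esymm (m + 1))) := by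
    linear_combination ((m : ℝ) + 1) * (t.esymm (m - 1) * t.esymm (m + 1)) * A0 * hA2A1.symm
  have l2 : ((m : ℝ) * ((m : ℝ) + 1 + (d : ℝ) - m) * t.esymm m ^ 2) * (A0 * A1)
      = (m : ℝ) * (A1 * t.esymm m) ^ 2 := by
    linear_combination (m : ℝ) * A1 * (t.esymm m) ^ 2 * hA1A0.symm
  have hfin : (((m : ℝ) + 1) * ((m : ℝ) + 1 + (d : ℝ) - m + 1) * (t.esymm (m - 1) * t.esymm (m + 1))) * (A0 * A1)
      ≤ ((m : ℝ) * ((m : ℝ) + 1 + (d : ℝ) - m) * t.esymm m ^ 2) * (A0 * A1) := by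
    rw [l1, l2]
    exact hmul
  exact le_of_mul_le_mul_right hfin (by positivity)
open Multiset Polynomial

theorem maclaurin_chain (t : Multiset ℝ) (k : ℕ) (hk1 : 1 ≤ k) :
    k ≤ Multiset.card t → (∀ j, 1 ≤ j → j + 1 ≤ k → 0 < t.esymm j) →
    (k : ℝ) * (Multiset.card t : ℝ) * t.esymm k ≤
      ((Multiset.card t : ℝ) - k + 1) * (t.esymm 1 * t.esymm (k - 1)) := by
  induction k, hk1 using Nat.le_induction with
  | base =>
    intro hkc hpos
    rw [Nat.sub_self, esymm_zero']
    push_cast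
    apply le_of_eq
    ring
  | succ k hk ih =>
    intro hkc hpos
    have hcast : (1 : ℝ) ≤ (k : ℝ) := by exact_mod_cast hk
    have hNk : (k : ℝ) + 1 ≤ (Multiset.card t : ℝ) := by exact_mod_cast hkc
    have hσk : 0 < t.esymm k := hpos k hk (le_refl (k + 1))
    have hσ1 : 0 < t.esymm 1 := hpos 1 le_rfl (by omega)
    have hσkm : 0 < t.esymm (k - 1) := by
      rcases Nat.eq_or_lt_of_le hk with h1 | h2
      · rw [← h1]; rw [Nat.sub_self, esymm_zero']; norm_num
      · exact hpos (k - 1) (by omega) (by omega)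
    have hsimp : k + 1 - 1 = k := by omega
    rw [hsimp]
    push_cast
    rcases le_or_gt (t.esymm (k + 1)) 0 with hneg | hposk1
    · have hRpos : 0 < ((Multiset.card t : ℝ) - (k + 1) + 1) * (t.esymm 1 * t.esymm k) := by
        apply mul_pos
        · linarith
        · exact mul_pos hσ1 hσk
      have hLneg : ((k : ℝ) + 1) * (Multiset.card t : ℝ) * t.esymm (k + 1) ≤ 0 := by
        apply mul_nonpos_of_nonneg_of_nonpos
        · positivity
        · exact hneg
      linarith
    · have hnewton := newton_ineq t k hk hkc
      have hih := ih (by omega) (fun j hj1 hj2 => hpos j hj1 (by omega))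
      have step1 := mul_le_mul_of_nonneg_left hih
        (le_of_lt (mul_pos (show (0:ℝ) < (k:ℝ) + 1 by linarith) hposk1))
      have step2 := mul_le_mul_of_nonneg_left hnewton (le_of_lt hσ1)
      have hfin : (((k : ℝ) + 1) * (Multiset.card t : ℝ) * t.esymm (k + 1)) * ((k : ℝ) * t.esymm k)
          ≤ (((Multiset.card t : ℝ) - (k + 1) + 1) * (t.esymm 1 * t.esymm k)) * ((k : ℝ) * t.esymm k) := by
        nlinarith [step1, step2]
      exact le_of_mul_le_mul_right hfin (mul_pos (by linarith) hσk)
open Multiset Polynomial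

lemma esymmS_eq (n m : ℕ) (lam : Fin n → ℝ) :
    esymmS n m lam = ((Finset.univ (α := Fin n)).val.map lam).esymm m :=
  (Finset.esymm_map_val lam _ m).symm

lemma esymmSdel_eq (n m : ℕ) (lam : Fin n → ℝ) (i : Fin n) :
    esymmSdel n m lam i = ((Finset.univ.erase i).val.map lam).esymm m :=
  (Finset.esymm_map_val lam _ m).symm

lemma card_erase_univ (n : ℕ) (i : Fin n) : (Finset.univ.erase i).card = n - 1 := by
  rw [Finset.card_erase_of_mem (Finset.mem_univ i), Finset.card_univ, Fintype.card_fin]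

lemma card_del (n : ℕ) (lam : Fin n → ℝ) (i : Fin n) :
    Multiset.card ((Finset.univ.erase i).val.map lam) = n - 1 := by
  rw [Multiset.card_map, ← Finset.card_def, card_erase_univ]

lemma esymmS_zero (n : ℕ) (lam : Fin n → ℝ) : esymmS n 0 lam = 1 := by
  simp [esymmS, Finset.powersetCard_zero]

lemma esymmSdel_zero (n : ℕ) (lam : Fin n → ℝ) (i : Fin n) : esymmSdel n 0 lam i = 1 := by
  simp [esymmSdel, Finset.powersetCard_zero]

lemma esymmSdel_hi {n m : ℕ} (h : n - 1 < m) (lam : Fin n → ℝ) (i : Fin n) :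
    esymmSdel n m lam i = 0 := by
  rw [esymmSdel, Finset.powersetCard_eq_empty.mpr (by rw [card_erase_univ]; exact h)]
  simp


lemma esymmS_recur (n m : ℕ) (hm : 1 ≤ m) (lam : Fin n → ℝ) (i : Fin n) :
    esymmS n m lam = esymmSdel n m lam i + lam i * esymmSdel n (m - 1) lam i := by
  obtain ⟨m', rfl⟩ : ∃ m', m = m' + 1 := ⟨m - 1, by omega⟩
  rw [esymmS_eq, esymmSdel_eq, esymmSdel_eq]
  have hval : (Finset.univ (α := Fin n)).val = i ::ₘ (Finset.univ.erase i).val := by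
    rw [Finset.erase_val]
    exact (Multiset.cons_erase (Finset.mem_def.mp (Finset.mem_univ i))).symm
  rw [hval, Multiset.map_cons, esymm_cons]
  simp

lemma count_supersets {n : ℕ} (B : Finset (Fin n)) (m : ℕ) (hB : B.card ≤ m) :
    ((Finset.univ.powersetCard m).filter (fun A => B ⊆ A)).card
      = (n - B.card).choose (m - B.card) := by
  have h1 : ((Bᶜ).powersetCard (m - B.card)).card = (n - B.card).choose (m - B.card) := by
    rw [Finset.card_powersetCard, Finset.card_compl, Fintype.card_fin]
  rw [← h1]
  apply Finset.card_bij' (fun A _ => A \ B) (fun D _ => D ∪ B)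
  · intro A hA
    rw [Finset.mem_filter, Finset.mem_powersetCard] at hA
    obtain ⟨⟨_, hAcard⟩, hBA⟩ := hA
    rw [Finset.mem_powersetCard]
    constructor
    · intro x hx
      rw [Finset.mem_sdiff] at hx
      exact Finset.mem_compl.mpr hx.2
    · rw [Finset.card_sdiff_of_subset hBA, hAcard]
  · intro D hD
    rw [Finset.mem_powersetCard] at hD
    obtain ⟨hDsub, hDcard⟩ := hD
    have hdisj : Disjoint D B := by
      rw [Finset.disjoint_left]
      intro x hxD hxB
      exact Finset.mem_compl.mp (hDsub hxD) hxB
    rw [Finset.mem_filter, Finset.mem_powersetCard]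
    refine ⟨⟨Finset.subset_univ _, ?_⟩, Finset.subset_union_right⟩
    rw [Finset.card_union_of_disjoint hdisj, hDcard]
    omega
  · intro A hA
    rw [Finset.mem_filter] at hA
    exact Finset.sdiff_union_of_subset hA.2
  · intro D hD
    rw [Finset.mem_powersetCard] at hD
    have hdisj : Disjoint D B := by
      rw [Finset.disjoint_left]
      intro x hxD hxB
      exact Finset.mem_compl.mp (hD.1 hxD) hxB
    rw [Finset.union_sdiff_right]
    exact Finset.sdiff_eq_self_of_disjoint hdisj

lemma esymmS_affine (n m : ℕ) (hmn : m ≤ n) (lam : Fin n → ℝ) (a b : ℝ) :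
    esymmS n m (fun j => a * lam j + b)
      = ∑ j ∈ Finset.range (m + 1),
          ((n - j).choose (m - j) : ℝ) * a ^ j * b ^ (m - j) * esymmS n j lam := by
  have h1 : ∀ A ∈ Finset.univ.powersetCard m (α := Fin n),
      (∏ x ∈ A, (a * lam x + b))
        = ∑ B ∈ A.powerset, a ^ B.card * b ^ (m - B.card) * ∏ x ∈ B, lam x := by
    intro A hA
    have hAcard := (Finset.mem_powersetCard.mp hA).2
    rw [Finset.prod_add]
    apply Finset.sum_congr rfl
    intro B hB
    have hBA := Finset.mem_powerset.mp hB
    rw [Finset.prod_mul_distrib, Finset.prod_const, Finset.prod_const,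
      Finset.card_sdiff_of_subset hBA, hAcard]
    ring
  rw [esymmS, Finset.sum_congr rfl h1]
  rw [Finset.sum_comm' (t' := (Finset.univ (α := Fin n)).powerset)
    (s' := fun B => (Finset.univ.powersetCard m).filter (fun A => B ⊆ A))
    (fun A B => by
      rw [Finset.mem_filter, Finset.mem_powerset, Finset.mem_powerset]
      constructor
      · rintro ⟨h1, h2⟩
        exact ⟨⟨h1, h2⟩, Finset.subset_univ _⟩
      · rintro ⟨⟨h1, h2⟩, _⟩
        exact ⟨h1, h2⟩)]
  have h3 : ∀ B ∈ (Finset.univ (α := Fin n)).powerset,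
      (∑ _A ∈ (Finset.univ.powersetCard m).filter (fun A => B ⊆ A),
        (a ^ B.card * b ^ (m - B.card) * ∏ x ∈ B, lam x))
      = (((Finset.univ.powersetCard m).filter (fun A => B ⊆ A)).card : ℝ)
          * (a ^ B.card * b ^ (m - B.card) * ∏ x ∈ B, lam x) := by
    intro B _
    rw [Finset.sum_const, nsmul_eq_mul]
  rw [Finset.sum_congr rfl h3, Finset.sum_powerset]
  rw [Finset.card_univ, Fintype.card_fin]
  have h4 : ∀ j ∈ Finset.range (n + 1),
      (∑ B ∈ Finset.univ.powersetCard j,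
        ((((Finset.univ.powersetCard m).filter (fun A => B ⊆ A)).card : ℝ)
          * (a ^ B.card * b ^ (m - B.card) * ∏ x ∈ B, lam x)))
      = (if j ≤ m then ((n - j).choose (m - j) : ℝ) * a ^ j * b ^ (m - j) * esymmS n j lam
          else 0) := by
    intro j _
    by_cases hjm : j ≤ m
    · rw [if_pos hjm, esymmS, Finset.mul_sum]
      apply Finset.sum_congr rfl
      intro B hB
      have hBcard := (Finset.mem_powersetCard.mp hB).2
      rw [count_supersets B m (by rw [hBcard]; exact hjm), hBcard]
      ring
    · rw [if_neg hjm]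
      apply Finset.sum_eq_zero
      intro B hB
      have hBcard := (Finset.mem_powersetCard.mp hB).2
      have : (Finset.univ.powersetCard m).filter (fun A => B ⊆ A) = ∅ := by
        apply Finset.filter_false_of_mem
        intro A hA
        intro hBA
        have h5 := Finset.card_le_card hBA
        rw [hBcard, (Finset.mem_powersetCard.mp hA).2] at h5
        omega
      rw [this]
      simp
  rw [Finset.sum_congr rfl h4]
  rw [Finset.sum_ite, Finset.sum_const_zero, add_zero]
  have h6 : (Finset.range (n + 1)).filter (fun j => j ≤ m) = Finset.range (m + 1) := by
    ext j
    simp only [Finset.mem_filter, Finset.mem_range]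
    omega
  rw [h6]
open Multiset Polynomial

lemma esymmS_nonneg_of_gamma {n k : ℕ} {lam : Fin n → ℝ} (hlam : lam ∈ GammaCone n k)
    {j : ℕ} (hj : j ≤ k) : 0 ≤ esymmS n j lam := by
  rcases Nat.eq_zero_or_pos j with rfl | hj1
  · rw [esymmS_zero]; norm_num
  · exact le_of_lt (hlam j hj1 hj)

lemma gamma_affine {n k : ℕ} (hk1 : 1 ≤ k) (hkn : k ≤ n) {lam : Fin n → ℝ}
    (hlam : lam ∈ GammaCone n k) {a b : ℝ} (ha : 0 ≤ a) (hb : 0 ≤ b) (hab : 0 < a + b) :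
    (fun j => a * lam j + b) ∈ GammaCone n k := by
  intro m hm1 hmk
  rw [esymmS_affine n m (hmk.trans hkn)]
  apply Finset.sum_pos'
  · intro j hj
    rw [Finset.mem_range] at hj
    have hS : 0 ≤ esymmS n j lam := esymmS_nonneg_of_gamma hlam (by omega)
    positivity
  · rcases eq_or_lt_of_le ha with ha0 | hapos
    · refine ⟨0, Finset.mem_range.mpr (by omega), ?_⟩
      have hb0 : 0 < b := by linarith
      rw [esymmS_zero]
      have hch : 0 < ((n - 0).choose (m - 0) : ℝ) := by
        exact_mod_cast Nat.choose_pos (by omega : m - 0 ≤ n - 0)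
      positivity
    · refine ⟨m, Finset.mem_range.mpr (by omega), ?_⟩
      have hS : 0 < esymmS n m lam := hlam m hm1 hmk
      simp only [Nat.sub_self, Nat.choose_zero_right, pow_zero, Nat.cast_one, one_mul, mul_one]
      positivity

theorem gammaDel (k : ℕ) : ∀ (n : ℕ) (lam : Fin n → ℝ), 1 ≤ k → k ≤ n →
    lam ∈ GammaCone n k → ∀ (i : Fin n) (m : ℕ), m + 1 ≤ k → 0 < esymmSdel n m lam i := by
  induction k using Nat.strong_induction_on with
  | _ k ih =>
    intro n lam hk1 hkn hlam i m hmk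
    rcases Nat.eq_zero_or_pos m with rfl | hm1
    · rw [esymmSdel_zero]; norm_num
    rcases lt_or_eq_of_le hmk with hlt | heq
    · -- m + 1 < k
      exact ih (m + 1) hlt n lam (by omega) (by omega)
        (fun l hl1 hl2 => hlam l hl1 (by omega)) i m le_rfl
    · -- k = m + 1, with m ≥ 1
      subst heq
      set f : ℝ → ℝ := fun t =>
        ∑ A ∈ (Finset.univ.erase i).powersetCard m, ∏ j ∈ A, (t * lam j + (1 - t)) with hf
      have hf_eq : ∀ t : ℝ, f t = esymmSdel n m (fun j => t * lam j + (1 - t)) i :=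
        fun t => rfl
      have hcont : Continuous f := by
        apply continuous_finset_sum
        intro A _
        apply continuous_finset_prod
        intro x _
        fun_prop
      have hmem : ∀ t ∈ Set.Icc (0:ℝ) 1,
          (fun j => t * lam j + (1 - t)) ∈ GammaCone n (m + 1) := by
        intro t ht
        exact gamma_affine hk1 hkn hlam ht.1 (by linarith [ht.2]) (by linarith)
      have hne : ∀ t ∈ Set.Icc (0:ℝ) 1, f t ≠ 0 := by
        intro t ht h0
        rw [hf_eq t] at h0
        set mu : Fin n → ℝ := fun j => t * lam j + (1 - t) with hmu
        have hGm := hmem t ht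
        have hpos : ∀ j, j + 1 ≤ m → 0 < esymmSdel n j mu i := by
          intro j hj
          exact ih m (by omega) n mu (by omega) (by omega)
            (fun l hl1 hl2 => hGm l hl1 (by omega)) i j hj
      -- show esymmSdel n (m+1) mu i ≤ 0
        have hkk : esymmSdel n (m + 1) mu i ≤ 0 := by
          rcases lt_or_ge (m + 1) n with hlt2 | hge2
          · have hnewton := newton_ineq ((Finset.univ.erase i).val.map mu) m hm1
              (by rw [card_del]; omega)
            rw [← esymmSdel_eq, ← esymmSdel_eq, ← esymmSdel_eq, card_del] at hnewton
            rw [h0] at hnewton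
            have hm1pos : 0 < esymmSdel n (m - 1) mu i := hpos (m - 1) (by omega)
            have hcoef : 0 < ((m : ℝ) + 1) * (((n - 1 : ℕ) : ℝ) - m + 1) := by
              have h9 : (m : ℝ) + 1 ≤ ((n - 1 : ℕ) : ℝ) := by
                have : m + 1 ≤ n - 1 := by omega
                exact_mod_cast this
              nlinarith [h9]
            have h2 : ((m : ℝ) + 1) * (((n - 1 : ℕ) : ℝ) - m + 1)
                * (esymmSdel n (m - 1) mu i * esymmSdel n (m + 1) mu i) ≤ 0 := by
              nlinarith [hnewton]
            by_contra hgt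
            push_neg at hgt
            have h3 : 0 < ((m : ℝ) + 1) * (((n - 1 : ℕ) : ℝ) - m + 1)
                * (esymmSdel n (m - 1) mu i * esymmSdel n (m + 1) mu i) :=
              mul_pos hcoef (mul_pos hm1pos hgt)
            linarith
          · have : n - 1 < m + 1 := by omega
            rw [esymmSdel_hi this mu i]
        have hrec := esymmS_recur n (m + 1) (by omega) mu i
        have hΓ := hGm (m + 1) (by omega) le_rfl
        rw [hrec] at hΓ
        simp only [Nat.add_sub_cancel] at hΓ
        rw [h0, mul_zero, add_zero] at hΓ
        linarith
      have hf0 : 0 < f 0 := by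
        have h00 : f 0 = (((n - 1).choose m : ℕ) : ℝ) := by
          have hone : ∀ A ∈ (Finset.univ.erase i).powersetCard m,
              (∏ j ∈ A, ((0:ℝ) * lam j + (1 - 0))) = 1 := by
            intro A _
            rw [Finset.prod_congr rfl (fun x _ => by norm_num : ∀ x ∈ A, (0:ℝ) * lam x + (1 - 0) = 1)]
            exact Finset.prod_const_one
          simp only [hf]
          rw [Finset.sum_congr rfl hone, Finset.sum_const, Finset.card_powersetCard,
            card_erase_univ, nsmul_eq_mul, mul_one]
        rw [h00]
        exact_mod_cast Nat.choose_pos (by omega : m ≤ n - 1)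
      have hf1 : f 1 = esymmSdel n m lam i := by
        rw [hf_eq 1]
        congr 1
        funext j
        norm_num
      by_contra hle
      push_neg at hle
      have hne1 : f 1 ≠ 0 := hne 1 ⟨zero_le_one, le_rfl⟩
      have hflt : f 1 < 0 := by
        rw [hf1] at hne1 ⊢
        exact lt_of_le_of_ne hle hne1
      have hsub := intermediate_value_Icc' (zero_le_one (α := ℝ)) hcont.continuousOn
      have h0mem : (0 : ℝ) ∈ Set.Icc (f 1) (f 0) := ⟨le_of_lt hflt, le_of_lt hf0⟩
      obtain ⟨t, ht, hft⟩ := hsub h0mem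
      exact hne t ht hft


end MacAux

/-- For `n ≥ 2`, `1 ≤ k ≤ n`, `lam ∈ Γ_k` and an index `i`,
`S_k(lam|i)/S_{k−1}(lam|i) ≤ (1/k)·((n−k)/(n−1))·S_1(lam|i)`. -/
theorem esymmSdel_maclaurin_ineq (n k : ℕ) (hn : 2 ≤ n) (hk1 : 1 ≤ k) (hkn : k ≤ n)
    (lam : Fin n → ℝ) (hlam : lam ∈ GammaCone n k) (i : Fin n) :
    esymmSdel n k lam i / esymmSdel n (k - 1) lam i ≤
      (1 / (k : ℝ)) * (((n : ℝ) - k) / ((n : ℝ) - 1)) * esymmSdel n 1 lam i := by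
  have hdel : ∀ j, j + 1 ≤ k → 0 < esymmSdel n j lam i :=
    fun j hj => MacAux.gammaDel k n lam hk1 hkn hlam i j hj
  have hkm1 : 0 < esymmSdel n (k - 1) lam i := by
    rcases Nat.eq_or_lt_of_le hk1 with h1 | h2
    · rw [← h1, Nat.sub_self, MacAux.esymmSdel_zero]; norm_num
    · exact hdel (k - 1) (by omega)
  have hn1 : (0 : ℝ) < (n : ℝ) - 1 := by
    have : (2 : ℝ) ≤ (n : ℝ) := by exact_mod_cast hn
    linarith
  have hk0 : (0 : ℝ) < (k : ℝ) := by exact_mod_cast hk1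
  rcases eq_or_lt_of_le hkn with heq | hlt
  · -- k = n
    subst heq
    rw [MacAux.esymmSdel_hi (by omega) lam i, zero_div, sub_self, zero_div, mul_zero, zero_mul]
  · -- k < n
    have hchain := MacAux.maclaurin_chain ((Finset.univ.erase i).val.map lam) k hk1
      (by rw [MacAux.card_del]; omega)
      (by
        intro j hj1 hj2
        rw [← MacAux.esymmSdel_eq]
        exact hdel j (by omega))
    rw [← MacAux.esymmSdel_eq, ← MacAux.esymmSdel_eq, ← MacAux.esymmSdel_eq, MacAux.card_del] at hchain
    have hcast : ((n - 1 : ℕ) : ℝ) = (n : ℝ) - 1 := by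
      have : (1 : ℕ) ≤ n := by omega
      push_cast [this]
      ring
    rw [hcast] at hchain
    -- hchain : k * (n-1) * σ_k ≤ ((n-1) - k + 1) * (σ_1 * σ_{k-1})
    have hsimp : (n : ℝ) - 1 - k + 1 = (n : ℝ) - k := by ring
    rw [hsimp] at hchain
    rw [div_le_iff₀ hkm1]
    have hform : (1 / (k : ℝ)) * (((n : ℝ) - k) / ((n : ℝ) - 1)) * esymmSdel n 1 lam i
          * esymmSdel n (k - 1) lam i
        = (((n : ℝ) - k) * (esymmSdel n 1 lam i * esymmSdel n (k - 1) lam i))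
          / ((k : ℝ) * ((n : ℝ) - 1)) := by
      field_simp
    rw [hform, le_div_iff₀ (by positivity)]
    nlinarith [hchain]
end

section
/- Let 1 ≤ k ≤ n be integers. There exists a constant θ = θ(n,k) > 0 such that for every λ = (λ_1,…,λ_n) in the closure of Γ_k with λ_1 ≥ λ_2 ≥ ⋯ ≥ λ_n and for every index i with k ≤ i ≤ n, one has S_{k−1}(λ|i) ≥ θ λ_1 λ_2 ⋯ λ_{k−1} (the product over the first k−1 entries, interpreted as 1 when k = 1). -/
open Finset

set_option linter.unusedSectionVars false
set_option maxHeartbeats 1000000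

section ESbasic
variable {α : Type*} [DecidableEq α]

noncomputable def ES (f : α → ℝ) (m : ℕ) (s : Finset α) : ℝ :=
  ∑ A ∈ s.powersetCard m, ∏ j ∈ A, f j

lemma ES_zero (f : α → ℝ) (s : Finset α) : ES f 0 s = 1 := by
  simp [ES]

lemma ES_of_card_lt (f : α → ℝ) {m : ℕ} {s : Finset α} (h : s.card < m) : ES f m s = 0 := by
  rw [ES, Finset.powersetCard_eq_empty.2 h]; simp

lemma ES_self (f : α → ℝ) (s : Finset α) : ES f s.card s = ∏ j ∈ s, f j := by
  simp [ES, Finset.powersetCard_self]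

lemma ES_erase (f : α → ℝ) (m : ℕ) {s : Finset α} {i : α} (hi : i ∈ s) :
    ES f (m + 1) s = ES f (m + 1) (s.erase i) + f i * ES f m (s.erase i) := by
  conv_lhs => rw [← Finset.insert_erase hi]
  rw [ES, Finset.powersetCard_succ_insert (Finset.notMem_erase i s)]
  rw [Finset.sum_union]
  · congr 1
    rw [Finset.sum_image (fun A hA B hB h => ?_), ES, Finset.mul_sum]
    · refine Finset.sum_congr rfl fun A hA => ?_
      rw [Finset.prod_insert fun hmem => ?_]
      exact Finset.notMem_erase i s ((Finset.mem_powersetCard.1 hA).1 hmem)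
    · have hiA : i ∉ A := fun hmem => Finset.notMem_erase i s ((Finset.mem_powersetCard.1 hA).1 hmem)
      have hiB : i ∉ B := fun hmem => Finset.notMem_erase i s ((Finset.mem_powersetCard.1 hB).1 hmem)
      have := congrArg (Finset.erase · i) h
      simpa [Finset.erase_insert hiA, Finset.erase_insert hiB] using this
  · rw [Finset.disjoint_left]
    rintro A hA hA'
    obtain ⟨B, hB, rfl⟩ := Finset.mem_image.1 hA'
    exact Finset.notMem_erase i s ((Finset.mem_powersetCard.1 hA).1 (Finset.mem_insert_self i B))

lemma sum_ES_erase (f : α → ℝ) (m : ℕ) (s : Finset α) :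
    ∑ i ∈ s, ES f m (s.erase i) = ((s.card - m : ℕ) : ℝ) * ES f m s := by
  have key : ∀ i ∈ s, ES f m (s.erase i)
      = ∑ A ∈ s.powersetCard m, if i ∈ A then 0 else ∏ j ∈ A, f j := by
    intro i _
    rw [ES]
    have : (s.erase i).powersetCard m = (s.powersetCard m).filter (fun A => i ∉ A) := by
      ext A
      simp only [Finset.mem_powersetCard, Finset.mem_filter, Finset.subset_erase]
      tauto
    rw [this, Finset.sum_filter]
    exact Finset.sum_congr rfl fun A _ => by by_cases h : i ∈ A <;> simp [h]
  rw [Finset.sum_congr rfl key, Finset.sum_comm, ES, Finset.mul_sum]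
  refine Finset.sum_congr rfl fun A hA => ?_
  obtain ⟨hAs, hAcard⟩ := Finset.mem_powersetCard.1 hA
  rw [Finset.sum_ite, Finset.sum_const_zero, zero_add, Finset.sum_const]
  have : s.filter (fun i => i ∉ A) = s \ A := (Finset.sdiff_eq_filter s A).symm
  rw [this, Finset.card_sdiff_of_subset hAs, hAcard, nsmul_eq_mul]
end ESbasic

section NewtonBase

lemma newton_base (m : ℕ) (f : Fin (m+2) → ℝ) :
    ((m+2).choose (m+1) : ℝ)^2 * (ES f m univ * ES f (m+2) univ) ≤
      (((m+2).choose m : ℝ) * ((m+2).choose (m+2) : ℝ)) * ES f (m+1) univ ^ 2 := by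
  set y : Fin (m+2) → ℝ := fun i => ∏ j ∈ univ.erase i, f j with hy
  have hcard : (univ : Finset (Fin (m+2))).card = m + 2 := by simp
  have hcarde : ∀ i : Fin (m+2), (univ.erase i).card = m + 1 := by
    intro i; rw [Finset.card_erase_of_mem (mem_univ i), hcard]; omega
  -- E_{m+1} = ∑ y
  have hE1 : ES f (m+1) univ = ∑ i, y i := by
    have h := sum_ES_erase f (m+1) (univ : Finset (Fin (m+2)))
    rw [hcard, show m + 2 - (m+1) = 1 from by omega] at h
    push_cast at h
    rw [one_mul] at h
    have hyi : ∀ i : Fin (m+2), ES f (m+1) (univ.erase i) = y i := by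
      intro i
      have := ES_self f (univ.erase i)
      rw [hcarde i] at this
      exact this
    rw [← h]
    exact Finset.sum_congr rfl (fun i _ => hyi i)
  -- 2 E_m = ∑_i ∑_{j≠i} z i j ; and y i * y j = P * z i j
  have hE2 : 2 * ES f m univ = ∑ i, ∑ j ∈ univ.erase i, ∏ l ∈ (univ.erase i).erase j, f l := by
    have h := sum_ES_erase f m (univ : Finset (Fin (m+2)))
    rw [hcard, show m + 2 - m = 2 from by omega] at h
    have inner : ∀ i : Fin (m+2), ES f m (univ.erase i)
        = ∑ j ∈ univ.erase i, ∏ l ∈ (univ.erase i).erase j, f l := by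
      intro i
      have h' := sum_ES_erase f m (univ.erase i)
      rw [hcarde i, show m + 1 - m = 1 from by omega] at h'
      push_cast at h'
      rw [one_mul] at h'
      rw [← h']
      refine Finset.sum_congr rfl fun j hj => ?_
      have := ES_self f ((univ.erase i).erase j)
      rw [Finset.card_erase_of_mem hj, hcarde i] at this
      simpa using this
    rw [← Finset.sum_congr rfl (fun i _ => inner i), h]
    push_cast; ring
  set P : ℝ := ES f (m+2) univ with hP
  have hPP : P = ∏ j, f j := by
    have := ES_self f (univ : Finset (Fin (m+2)))
    rw [hcard] at this
    rw [hP, this]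
  have hyz : ∀ i : Fin (m+2), ∀ j ∈ univ.erase i,
      y i * y j = P * ∏ l ∈ (univ.erase i).erase j, f l := by
    intro i j hj
    have hij : i ≠ j := fun h => (Finset.ne_of_mem_erase hj h.symm).elim
    have hie : i ∈ univ.erase j := Finset.mem_erase.2 ⟨hij, mem_univ i⟩
    have e1 : ∏ l ∈ univ.erase i, f l = (∏ l ∈ (univ.erase i).erase j, f l) * f j :=
      (Finset.prod_erase_mul _ _ hj).symm
    have e2 : ∏ l ∈ univ.erase j, f l = (∏ l ∈ (univ.erase j).erase i, f l) * f i :=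
      (Finset.prod_erase_mul _ _ hie).symm
    have e3 : (univ.erase j).erase i = (univ.erase i).erase j := Finset.erase_right_comm
    have e4 : P = (∏ l ∈ univ.erase i, f l) * f i := by
      rw [hPP, ← Finset.prod_erase_mul univ f (mem_univ i)]
    rw [hy]; simp only []
    rw [e1, e2, e3, e4, e1]
    ring
  -- (∑ y)² = ∑ y² + P * (2 E_m)
  have hsq : (∑ i, y i)^2 = (∑ i, y i ^ 2) + P * (2 * ES f m univ) := by
    have expand : (∑ i, y i)^2 = ∑ i, (y i ^ 2 + ∑ j ∈ univ.erase i, y i * y j) := by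
      rw [sq, Finset.sum_mul_sum]
      refine Finset.sum_congr rfl fun i _ => ?_
      rw [← Finset.add_sum_erase _ (fun j => y i * y j) (mem_univ i), sq]
    rw [expand, Finset.sum_add_distrib, hE2, Finset.mul_sum]
    congr 1
    refine Finset.sum_congr rfl fun i _ => ?_
    rw [Finset.mul_sum]
    exact Finset.sum_congr rfl fun j hj => hyz i j hj
  -- Cauchy-Schwarz
  have hCS : (∑ i, y i)^2 ≤ (m+2 : ℝ) * ∑ i, y i ^ 2 := by
    have := Finset.sum_mul_sq_le_sq_mul_sq univ y (fun _ => (1:ℝ))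
    simp only [mul_one, one_pow] at this
    calc (∑ i, y i)^2 ≤ (∑ i, y i ^ 2) * ∑ _i : Fin (m+2), (1:ℝ) := this
      _ = (m+2:ℝ) * ∑ i, y i ^ 2 := by rw [Finset.sum_const, hcard]; push_cast; ring
  -- choose arithmetic
  have hc1 : ((m+2).choose (m+1) : ℝ) = (m+2 : ℝ) := by
    rw [Nat.choose_succ_self_right]; push_cast; ring
  have hc2 : ((m+2).choose (m+2) : ℝ) = 1 := by rw [Nat.choose_self]; norm_num
  have hc3 : 2 * ((m+2).choose m : ℝ) = (m+2:ℝ) * (m+1:ℝ) := by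
    have h1 : (m+2).choose m = (m+2).choose 2 := by
      have := Nat.choose_symm (show 2 ≤ m + 2 by omega)
      rw [show m + 2 - 2 = m from by omega] at this
      exact this
    have h2 : (m+2).choose 2 * 2 = (m+2).choose 1 * (m+2-1) := Nat.choose_succ_right_eq (m+2) 1
    rw [h1]
    have : ((m+2).choose 2 * 2 : ℕ) = ((m+2) * (m+1) : ℕ) := by
      rw [h2, Nat.choose_one_right, show m + 2 - 1 = m + 1 from by omega]
    have := congrArg (fun x : ℕ => (x:ℝ)) this
    push_cast at this; linarith
  -- combine
  rw [hc1, hc2, hE1]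
  have key : 2 * ((m+2:ℝ) * ((m+2:ℝ) * (ES f m univ * P)))
      ≤ 2 * (((m+2).choose m : ℝ) * (∑ i, y i)^2) := by
    have h1 : (m+2:ℝ) * (P * (2 * ES f m univ)) = (m+2:ℝ)*(∑ i, y i)^2 - (m+2:ℝ)*(∑ i, y i^2) := by
      rw [hsq]; ring
    have h2 : (m+2:ℝ)*(∑ i, y i)^2 - (m+2:ℝ)*(∑ i, y i^2) ≤ ((m+1):ℝ) * (∑ i, y i)^2 := by
      nlinarith [hCS]
    calc 2 * ((m+2:ℝ) * ((m+2:ℝ) * (ES f m univ * P))) = (m+2:ℝ) * ((m+2:ℝ) * (P * (2 * ES f m univ))) := by ring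
      _ ≤ (m+2:ℝ) * (((m+1):ℝ) * (∑ i, y i)^2) := by
          rw [h1]; nlinarith [hCS]
      _ = 2 * (((m+2).choose m : ℝ) * (∑ i, y i)^2) := by linear_combination (-(∑ i, y i)^2) * hc3
  nlinarith [key]

end NewtonBase

section NewtonM
open Polynomial

lemma exists_fn (ρ : Multiset ℝ) (N : ℕ) (h : Multiset.card ρ = N) :
    ∃ f : Fin N → ℝ, Finset.univ.val.map f = ρ := by
  have hl : ρ.toList.length = N := by rw [Multiset.length_toList, h]
  refine ⟨fun i => ρ.toList.get (Fin.cast hl.symm i), ?_⟩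
  rw [Fin.univ_val_map]
  have := (List.ofFn_congr hl ρ.toList.get).symm
  rw [this, List.ofFn_get, Multiset.coe_toList]

lemma esymm_eq_ES {N : ℕ} {ρ : Multiset ℝ} {f : Fin N → ℝ}
    (hf : Finset.univ.val.map f = ρ) (t : ℕ) : ρ.esymm t = ES f t Finset.univ := by
  rw [← hf, Finset.esymm_map_val]; rfl

theorem newton_multiset_s5 (M : ℕ) : ∀ (ρ : Multiset ℝ), Multiset.card ρ = M → ∀ m : ℕ, m + 2 ≤ M →
    (M.choose (m+1) : ℝ)^2 * (ρ.esymm m * ρ.esymm (m+2)) ≤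
      ((M.choose m : ℝ) * (M.choose (m+2) : ℝ)) * (ρ.esymm (m+1))^2 := by
  induction M with
  | zero => intro ρ h m hm; omega
  | succ M ih =>
    intro ρ hρ m hm
    rcases eq_or_lt_of_le hm with heq | hlt
    · obtain ⟨f, hf⟩ := exists_fn ρ (m+2) (by omega)
      have h1 := newton_base m f
      simp only [esymm_eq_ES hf]
      rw [← heq]
      exact h1
    · -- inductive step
      have hM : m + 2 ≤ M := by omega
      set p : Polynomial ℝ := (ρ.map (fun r => X - C r)).prod with hp
      have hmonic : p.Monic := monic_multiset_prod_of_monic _ _ (fun r _ => monic_X_sub_C r)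
      have hdeg : p.natDegree = M + 1 := by
        rw [hp, natDegree_multiset_prod_X_sub_C_eq_card, hρ]
      have hroots : p.roots = ρ := roots_multiset_prod_X_sub_C ρ
      set q : Polynomial ℝ := derivative p with hq
      have hcard1 : M + 1 ≤ Multiset.card q.roots + 1 := by
        have := card_roots_le_derivative p
        rw [hroots, hρ] at this; exact this
      have hqdeg_le : q.natDegree ≤ M := by
        have := natDegree_derivative_le p
        rw [hdeg] at this; exact this.trans (by omega)
      have hcard2 : Multiset.card q.roots ≤ M := le_trans (card_roots' q) hqdeg_le
      have hcardq : Multiset.card q.roots = M := le_antisymm hcard2 (by omega)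
      have hqdeg : q.natDegree = M := le_antisymm hqdeg_le (by
        by_contra hcon
        push_neg at hcon
        have : Multiset.card q.roots ≤ q.natDegree := card_roots' q
        omega)
      have hlead : q.coeff M = (M + 1 : ℝ) := by
        rw [hq, coeff_derivative]
        have h1 : p.coeff (M + 1) = 1 := by
          have := hmonic.coeff_natDegree
          rwa [hdeg] at this
        rw [h1]; push_cast; ring
      have hqfact : C q.leadingCoeff * (q.roots.map fun a => X - C a).prod = q :=
        C_leadingCoeff_mul_prod_multiset_X_sub_C (by rw [hcardq, hqdeg])
      have hleadq : q.leadingCoeff = (M+1 : ℝ) := by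
        rw [leadingCoeff, hqdeg, hlead]
      set ρ' : Multiset ℝ := q.roots with hρ'
      have hrel : ∀ t : ℕ, t ≤ M → (M+1 : ℝ) * ρ'.esymm t = ((M + 1 - t : ℕ) : ℝ) * ρ.esymm t := by
        intro t ht
        have e1 : q.coeff (M - t) = p.coeff (M - t + 1) * (M - t + 1 : ℕ) := by
          rw [hq, coeff_derivative]; push_cast; ring
        have e2 : p.coeff (M - t + 1) = (-1)^(t) * ρ.esymm t := by
          have h2 := Multiset.prod_X_sub_C_coeff ρ (show M - t + 1 ≤ Multiset.card ρ by omega)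
          rw [← hp, hρ, show M + 1 - (M - t + 1) = t from by omega] at h2
          exact h2
        have e3 : q.coeff (M - t) = (M+1 : ℝ) * ((-1)^t * ρ'.esymm t) := by
          conv_lhs => rw [← hqfact]
          rw [coeff_C_mul, hleadq]
          have h3 := Multiset.prod_X_sub_C_coeff ρ' (show M - t ≤ Multiset.card ρ' by rw [hcardq]; omega)
          rw [hcardq, show M - (M - t) = t from by omega] at h3
          rw [h3]
        have e4 : ((-1:ℝ)^t) * ((M+1 : ℝ) * ρ'.esymm t)
            = ((-1:ℝ)^t) * (((M + 1 - t : ℕ) : ℝ) * ρ.esymm t) := by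
          have : ((M+1:ℝ)) * ((-1)^t * ρ'.esymm t) = ((M - t + 1 : ℕ):ℝ) * ((-1)^t * ρ.esymm t) := by
            rw [← e3, e1, e2]; push_cast; ring
          rw [show (M + 1 - t : ℕ) = (M - t + 1 : ℕ) from by omega]
          linarith [this]
        exact mul_left_cancel₀ (pow_ne_zero t (by norm_num : (-1:ℝ) ≠ 0)) e4
      obtain ⟨d, hd⟩ : ∃ d, M = m + 2 + d := ⟨M - (m+2), by omega⟩
      have IH := ih ρ' hcardq m hM
      have r1 := hrel m (by omega)
      have r2 := hrel (m+1) (by omega)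
      have r3 := hrel (m+2) (by omega)
      rw [show (M + 1 - m : ℕ) = d + 3 from by omega] at r1
      rw [show (M + 1 - (m+1) : ℕ) = d + 2 from by omega] at r2
      rw [show (M + 1 - (m+2) : ℕ) = d + 1 from by omega] at r3
      have ci : ∀ t : ℕ, t ≤ M → ((M:ℝ)+1) * (M.choose t : ℝ)
          = (((M+1).choose t : ℝ)) * ((M + 1 - t : ℕ) : ℝ) := by
        intro t ht
        have h1 := Nat.add_one_mul_choose_eq M t
        have h2 := Nat.choose_succ_right_eq (M+1) t
        have h3 : (M+1) * M.choose t = (M+1).choose t * (M+1-t) := by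
          rw [← h2, ← h1]
        exact_mod_cast congrArg (fun x : ℕ => (x:ℝ)) h3
      have c1 := ci m (by omega)
      have c2 := ci (m+1) (by omega)
      have c3 := ci (m+2) (by omega)
      rw [show (M + 1 - m : ℕ) = d + 3 from by omega] at c1
      rw [show (M + 1 - (m+1) : ℕ) = d + 2 from by omega] at c2
      rw [show (M + 1 - (m+2) : ℕ) = d + 1 from by omega] at c3
      push_cast at r1 r2 r3 c1 c2 c3
      -- multiply IH through by (M+1)^4
      have hM1pos : (0:ℝ) < ((M:ℝ)+1) := by positivity
      have H := mul_le_mul_of_nonneg_left IH (le_of_lt (pow_pos hM1pos 4))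
      have eL : ((M:ℝ)+1)^4 * ((M.choose (m+1) : ℝ)^2 * (ρ'.esymm m * ρ'.esymm (m+2)))
          = (((d:ℝ)+1)*((d:ℝ)+2)^2*((d:ℝ)+3)) * (((M+1).choose (m+1) : ℝ)^2 * (ρ.esymm m * ρ.esymm (m+2))) := by
        calc ((M:ℝ)+1)^4 * ((M.choose (m+1) : ℝ)^2 * (ρ'.esymm m * ρ'.esymm (m+2)))
            = (((M:ℝ)+1) * (M.choose (m+1) : ℝ))^2 * ((((M:ℝ)+1) * ρ'.esymm m) * (((M:ℝ)+1) * ρ'.esymm (m+2))) := by ring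
          _ = (((M+1).choose (m+1) : ℝ) * ((d:ℝ)+2))^2 * (((((d:ℝ)+3)) * ρ.esymm m) * ((((d:ℝ)+1)) * ρ.esymm (m+2))) := by rw [c2, r1, r3]
          _ = (((d:ℝ)+1)*((d:ℝ)+2)^2*((d:ℝ)+3)) * (((M+1).choose (m+1) : ℝ)^2 * (ρ.esymm m * ρ.esymm (m+2))) := by ring
      have eR : ((M:ℝ)+1)^4 * (((M.choose m : ℝ) * (M.choose (m+2) : ℝ)) * (ρ'.esymm (m+1))^2)
          = (((d:ℝ)+1)*((d:ℝ)+2)^2*((d:ℝ)+3)) * ((((M+1).choose m : ℝ) * (((M+1).choose (m+2) : ℝ))) * (ρ.esymm (m+1))^2) := by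
        calc ((M:ℝ)+1)^4 * (((M.choose m : ℝ) * (M.choose (m+2) : ℝ)) * (ρ'.esymm (m+1))^2)
            = ((((M:ℝ)+1) * (M.choose m : ℝ)) * ((((M:ℝ)+1)) * (M.choose (m+2) : ℝ))) * ((((M:ℝ)+1)) * ρ'.esymm (m+1))^2 := by ring
          _ = ((((M+1).choose m : ℝ) * ((d:ℝ)+3)) * (((M+1).choose (m+2) : ℝ) * ((d:ℝ)+1))) * (((d:ℝ)+2) * ρ.esymm (m+1))^2 := by rw [c1, c3, r2]
          _ = (((d:ℝ)+1)*((d:ℝ)+2)^2*((d:ℝ)+3)) * ((((M+1).choose m : ℝ) * (((M+1).choose (m+2) : ℝ))) * (ρ.esymm (m+1))^2) := by ring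
      rw [eL, eR] at H
      have hκ : (0:ℝ) < ((d:ℝ)+1)*((d:ℝ)+2)^2*((d:ℝ)+3) := by positivity
      have := le_of_mul_le_mul_left H hκ
      convert this using 2 <;> push_cast <;> ring
end NewtonM


lemma newton_ES {α : Type*} [DecidableEq α] (f : α → ℝ) (s : Finset α) (m : ℕ)
    (h : m + 2 ≤ s.card) :
    (s.card.choose (m+1) : ℝ)^2 * (ES f m s * ES f (m+2) s) ≤
      ((s.card.choose m : ℝ) * (s.card.choose (m+2) : ℝ)) * (ES f (m+1) s)^2 := by
  have hcard : Multiset.card (s.val.map f) = s.card := by simp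
  have h1 := newton_multiset_s5 s.card (s.val.map f) hcard m h
  have he : ∀ t, (s.val.map f).esymm t = ES f t s := fun t => by
    rw [Finset.esymm_map_val]; rfl
  simp only [he] at h1
  exact h1


section Cone
variable {α : Type*} [DecidableEq α]

def GoodES (f : α → ℝ) (k : ℕ) (s : Finset α) : Prop := ∀ m, 1 ≤ m → m ≤ k → 0 ≤ ES f m s

lemma goodES_mono {f : α → ℝ} {k k' : ℕ} {s : Finset α} (h : GoodES f k s) (hk : k' ≤ k) :
    GoodES f k' s := fun m h1 h2 => h m h1 (le_trans h2 hk)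

lemma goodES_nonneg {f : α → ℝ} {k : ℕ} {s : Finset α} (h : GoodES f k s) {m : ℕ} (hm : m ≤ k) :
    0 ≤ ES f m s := by
  rcases Nat.eq_zero_or_pos m with rfl | hpos
  · rw [ES_zero]; norm_num
  · exact h m hpos hm

lemma nonneg_of_goodES {f : α → ℝ} {k : ℕ} {s : Finset α} (h : GoodES f k s)
    (hcard : s.card ≤ k) : ∀ i ∈ s, 0 ≤ f i := by
  intro i hi
  by_contra hneg
  push_neg at hneg
  set t : ℝ := -f i with ht
  have htpos : 0 < t := by rw [ht]; linarith
  have hzero : ∏ j ∈ s, (f j + t) = 0 :=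
    Finset.prod_eq_zero hi (by rw [ht]; ring)
  have hpos : 0 < ∏ j ∈ s, (f j + t) := by
    have hexp : ∏ j ∈ s, (f j + t)
        = ∑ j ∈ Finset.range (s.card + 1), ES f j s * t ^ (s.card - j) := by
      rw [Finset.prod_add, Finset.sum_powerset]
      refine Finset.sum_congr rfl fun j hj => ?_
      rw [ES, Finset.sum_mul]
      refine Finset.sum_congr rfl fun A hA => ?_
      obtain ⟨hAs, hAcard⟩ := Finset.mem_powersetCard.1 hA
      rw [Finset.prod_const, Finset.card_sdiff_of_subset hAs, hAcard]
    rw [hexp]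
    have hterm : ∀ j ∈ Finset.range (s.card + 1), 0 ≤ ES f j s * t ^ (s.card - j) := by
      intro j hj
      exact mul_nonneg (goodES_nonneg h (le_trans (Nat.lt_succ_iff.1 (Finset.mem_range.1 hj)) hcard))
        (pow_nonneg (le_of_lt htpos) _)
    refine Finset.sum_pos' hterm ⟨0, Finset.mem_range.2 (Nat.succ_pos _), ?_⟩
    rw [ES_zero, one_mul, Nat.sub_zero]
    positivity
  rw [hzero] at hpos; exact lt_irrefl 0 hpos

/-- Removing an entry with nonpositive value preserves (and increases) the symmetric functions. -/
lemma ES_le_erase_of_nonpos {f : α → ℝ} {k : ℕ} {s : Finset α} {i : α} (hi : i ∈ s)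
    (hfi : f i ≤ 0) (h : GoodES f k s) : ∀ m, m ≤ k → ES f m s ≤ ES f m (s.erase i) := by
  intro m
  induction m with
  | zero => intro _; rw [ES_zero, ES_zero]
  | succ m ihm =>
    intro hmk
    have h1 : ES f m s ≤ ES f m (s.erase i) := ihm (by omega)
    have h2 : 0 ≤ ES f m (s.erase i) :=
      le_trans (goodES_nonneg h (by omega)) h1
    have h3 := ES_erase f m hi
    nlinarith [mul_nonpos_of_nonpos_of_nonneg hfi h2]

lemma goodES_erase_of_nonpos {f : α → ℝ} {k : ℕ} {s : Finset α} {i : α} (hi : i ∈ s)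
    (hfi : f i ≤ 0) (h : GoodES f k s) : GoodES f k (s.erase i) := by
  intro m h1 h2
  exact le_trans (h m h1 h2) (ES_le_erase_of_nonpos hi hfi h m h2)

lemma binom_strict {c K : ℕ} (h : K + 2 ≤ c) :
    (c.choose K : ℝ) * (c.choose (K+2) : ℝ) < ((c.choose (K+1) : ℝ))^2 := by
  obtain ⟨e, rfl⟩ : ∃ e, c = K + 2 + e := ⟨c - (K+2), by omega⟩
  have h1 := Nat.choose_succ_right_eq (K+2+e) K
  have h2 := Nat.choose_succ_right_eq (K+2+e) (K+1)
  rw [show K+2+e - K = e+2 from by omega] at h1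
  rw [show K+2+e - (K+1) = e+1 from by omega] at h2
  have hB : 0 < (K+2+e).choose (K+1) := Nat.choose_pos (by omega)
  set a : ℝ := ((K+2+e).choose K : ℝ) with ha
  set b : ℝ := ((K+2+e).choose (K+1) : ℝ) with hb
  set d : ℝ := ((K+2+e).choose (K+2) : ℝ) with hd
  have h1' : b*((K:ℝ)+1) = a*((e:ℝ)+2) := by
    rw [ha, hb]; exact_mod_cast congrArg (fun x : ℕ => (x:ℝ)) h1
  have h2' : d*((K:ℝ)+2) = b*((e:ℝ)+1) := by
    rw [hb, hd]
    have : (K+2+e).choose (K+1+1) * (K+1+1) = (K+2+e).choose (K+1) * (e+1) := h2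
    exact_mod_cast congrArg (fun x : ℕ => (x:ℝ)) this
  have key : (a*d)*(((e:ℝ)+2)*((K:ℝ)+2)) = (b^2)*(((K:ℝ)+1)*((e:ℝ)+1)) := by
    linear_combination (-(d*((K:ℝ)+2)))*h1' + (b*((K:ℝ)+1))*h2'
  have hbpos : (0:ℝ) < b := by rw [hb]; exact_mod_cast hB
  have hXY : ((K:ℝ)+1)*((e:ℝ)+1) < ((e:ℝ)+2)*((K:ℝ)+2) := by nlinarith
  have step : (b^2)*(((K:ℝ)+1)*((e:ℝ)+1)) < (b^2)*(((e:ℝ)+2)*((K:ℝ)+2)) := by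
    apply mul_lt_mul_of_pos_left hXY; positivity
  have : (a*d)*(((e:ℝ)+2)*((K:ℝ)+2)) < (b^2)*(((e:ℝ)+2)*((K:ℝ)+2)) := by
    rw [key]; exact step
  exact lt_of_mul_lt_mul_right this (by positivity)

/-- Fact D: deleting any entry from the closed cone `Γ̄_{k+1}` lands in `Γ̄_k`. -/
lemma goodES_erase {f : α → ℝ} : ∀ (k : ℕ) (s : Finset α) (i : α), i ∈ s →
    GoodES f (k+1) s → GoodES f k (s.erase i) := by
  intro k
  induction k with
  | zero => intro s i hi h m hm1 hm2; omega
  | succ k ihk =>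
    intro s i hi h m hm1 hm2
    rcases Nat.lt_or_ge m (k+1) with hlt | hge
    · exact ihk s i hi (goodES_mono h (by omega)) m hm1 (by omega)
    have hm : m = k + 1 := by omega
    subst hm
    rcases le_or_gt (f i) 0 with hfi | hfi
    · exact goodES_nonneg (goodES_erase_of_nonpos hi hfi h) (by omega)
    by_contra hneg
    push_neg at hneg
    set U : ℝ := ES f (k+1) (s.erase i) with hU
    set V : ℝ := ES f k (s.erase i) with hV
    have hVnn : 0 ≤ V := goodES_nonneg (ihk s i hi (goodES_mono h (by omega))) (le_refl k)
    have c1 : 0 ≤ U + f i * V := by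
      have := h (k+1) (by omega) (by omega)
      rw [ES_erase f k hi] at this
      linarith
    have c2 : 0 ≤ ES f (k+2) (s.erase i) + f i * U := by
      have := h (k+2) (by omega) (by omega)
      rw [ES_erase f (k+1) hi] at this
      linarith
    have hW2pos : 0 < ES f (k+2) (s.erase i) := by nlinarith
    have hcard : k + 2 ≤ (s.erase i).card := by
      by_contra hc
      push_neg at hc
      rw [ES_of_card_lt f hc] at hW2pos
      exact lt_irrefl 0 hW2pos
    have hnewton := newton_ES f (s.erase i) k hcard
    set c := (s.erase i).card
    have hVpos : 0 < V := by nlinarith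
    have hu2 : U^2 ≤ V * ES f (k+2) (s.erase i) := by nlinarith
    have hfinal : ((c.choose (k+1) : ℝ))^2 * U^2 ≤ ((c.choose k : ℝ) * (c.choose (k+2) : ℝ)) * U^2 := by
      calc ((c.choose (k+1) : ℝ))^2 * U^2
            ≤ ((c.choose (k+1) : ℝ))^2 * (V * ES f (k+2) (s.erase i)) :=
              mul_le_mul_of_nonneg_left hu2 (by positivity)
        _ ≤ ((c.choose k : ℝ) * (c.choose (k+2) : ℝ)) * U^2 := hnewton
    have hb := binom_strict (show k + 2 ≤ c from hcard)
    have hU2 : 0 < U^2 := by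
      have : U ≠ 0 := by intro h0; rw [h0] at hneg; exact lt_irrefl 0 hneg
      positivity
    have := mul_lt_mul_of_pos_right hb hU2
    linarith

end Cone

section Cone2
variable {α : Type*} [DecidableEq α]
lemma goodES_shrink {f : α → ℝ} {k : ℕ} : ∀ (s T : Finset α), T ⊆ s →
    (∀ l ∈ s, l ∉ T → f l ≤ 0) → GoodES f k s → GoodES f k T := by
  intro s
  induction s using Finset.strongInduction with
  | _ s ih =>
    intro T hTs hneg hgood
    rcases eq_or_ne T s with rfl | hne
    · exact hgood
    · obtain ⟨l, hls, hlT⟩ : ∃ l ∈ s, l ∉ T := by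
        by_contra hc; push_neg at hc; exact hne (Finset.Subset.antisymm hTs hc)
      exact ih (s.erase l) (Finset.erase_ssubset hls) T
        (Finset.subset_erase.2 ⟨hTs, hlT⟩)
        (fun x hx hxT => hneg x (Finset.mem_of_mem_erase hx) hxT)
        (goodES_erase_of_nonpos hls (hneg l hls hlT) hgood)

lemma nonneg_head {f : α → ℝ} {k : ℕ} {s T : Finset α} (hgood : GoodES f (k+1) s)
    (hTs : T ⊆ s) (hcard : T.card ≤ k)
    (hmin : ∀ j ∈ T, ∀ l ∈ s, l ∉ T → f l ≤ f j) :
    ∀ j ∈ T, 0 ≤ f j := by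
  intro j hj
  by_contra hneg
  push_neg at hneg
  have hshrink : GoodES f (k+1) T :=
    goodES_shrink s T hTs (fun l hl hlT => le_trans (hmin j hj l hl hlT) (le_of_lt hneg)) hgood
  exact absurd (nonneg_of_goodES hshrink (by omega) j hj) (not_le.2 hneg)

lemma master {f : α → ℝ} : ∀ (k : ℕ) (s T : Finset α), GoodES f (k+1) s → T ⊆ s → T.card = k →
    (∀ j ∈ T, 0 ≤ f j) → ∏ j ∈ T, f j ≤ ES f k s := by
  intro k
  induction k with
  | zero =>
    intro s T _ _ hcard _
    rw [Finset.card_eq_zero.1 hcard, Finset.prod_empty, ES_zero]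
  | succ k ihk =>
    intro s T hgood hTs hcard hnn
    obtain ⟨j₀, hj₀⟩ : T.Nonempty := Finset.card_pos.1 (by omega)
    have hj₀s : j₀ ∈ s := hTs hj₀
    have hgood' : GoodES f (k+1) (s.erase j₀) := goodES_erase (k+1) s j₀ hj₀s hgood
    have hIH := ihk (s.erase j₀) (T.erase j₀) hgood' (Finset.erase_subset_erase j₀ hTs)
      (by rw [Finset.card_erase_of_mem hj₀, hcard]; omega) (fun j hj => hnn j (Finset.mem_of_mem_erase hj))
    have hpos : 0 ≤ ES f (k+1) (s.erase j₀) := goodES_nonneg hgood' (by omega)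
    have hfj₀ : 0 ≤ f j₀ := hnn j₀ hj₀
    rw [ES_erase f k hj₀s, ← Finset.mul_prod_erase T f hj₀]
    nlinarith [mul_le_mul_of_nonneg_left hIH hfj₀]

lemma num_bound {c K N : ℕ} (h : K + 2 ≤ c) (hcN : c ≤ N) :
    4*((N:ℝ)+1)^2 * ((c.choose K : ℝ) * (c.choose (K+2) : ℝ))
      < (4*((N:ℝ)+1)^2 - 1) * ((c.choose (K+1) : ℝ))^2 := by
  obtain ⟨e, rfl⟩ : ∃ e, c = K + 2 + e := ⟨c - (K+2), by omega⟩
  have h1 := Nat.choose_succ_right_eq (K+2+e) K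
  have h2 := Nat.choose_succ_right_eq (K+2+e) (K+1)
  rw [show K+2+e - K = e+2 from by omega] at h1
  rw [show K+2+e - (K+1) = e+1 from by omega] at h2
  have hB : 0 < (K+2+e).choose (K+1) := Nat.choose_pos (by omega)
  set a : ℝ := ((K+2+e).choose K : ℝ) with ha
  set b : ℝ := ((K+2+e).choose (K+1) : ℝ) with hb
  set d : ℝ := ((K+2+e).choose (K+2) : ℝ) with hd
  have h1' : b*((K:ℝ)+1) = a*((e:ℝ)+2) := by
    rw [ha, hb]; exact_mod_cast congrArg (fun x : ℕ => (x:ℝ)) h1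
  have h2' : d*((K:ℝ)+2) = b*((e:ℝ)+1) := by
    rw [hb, hd]
    have h3 : (K+2+e).choose (K+1+1) * (K+1+1) = (K+2+e).choose (K+1) * (e+1) := h2
    exact_mod_cast congrArg (fun x : ℕ => (x:ℝ)) h3
  have key : (a*d)*(((e:ℝ)+2)*((K:ℝ)+2)) = (b^2)*(((K:ℝ)+1)*((e:ℝ)+1)) := by
    linear_combination (-(d*((K:ℝ)+2)))*h1' + (b*((K:ℝ)+1))*h2'
  have hbpos : (0:ℝ) < b := by rw [hb]; exact_mod_cast hB
  have he2 : ((e:ℝ)+2) ≤ (N:ℝ)+1 := by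
    have : e + 2 ≤ N := by omega
    exact_mod_cast le_trans (by exact_mod_cast this) (by linarith)
  have hK2 : ((K:ℝ)+2) ≤ (N:ℝ)+1 := by
    have : K + 2 ≤ N := by omega
    exact_mod_cast le_trans (by exact_mod_cast this) (by linarith)
  have hprodbound : ((e:ℝ)+2)*((K:ℝ)+2) ≤ ((N:ℝ)+1)^2 := by nlinarith
  have step1 : 4*((N:ℝ)+1)^2*(((K:ℝ)+1)*((e:ℝ)+1))
      < (4*((N:ℝ)+1)^2 - 1)*(((e:ℝ)+2)*((K:ℝ)+2)) := by nlinarith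
  have step2 : (4*((N:ℝ)+1)^2 * (a*d)) * (((e:ℝ)+2)*((K:ℝ)+2))
      < ((4*((N:ℝ)+1)^2 - 1) * b^2) * (((e:ℝ)+2)*((K:ℝ)+2)) := by
    have e1 : (4*((N:ℝ)+1)^2 * (a*d)) * (((e:ℝ)+2)*((K:ℝ)+2))
        = 4*((N:ℝ)+1)^2 * ((a*d)*(((e:ℝ)+2)*((K:ℝ)+2))) := by ring
    rw [e1, key]
    have hb2 : (0:ℝ) < b^2 := by positivity
    nlinarith [step1, hb2, mul_lt_mul_of_pos_left step1 hb2]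
  exact lt_of_mul_lt_mul_right step2 (by positivity)

lemma main_lemma {f : α → ℝ} (N : ℕ) :
    ∀ (K : ℕ) (s T : Finset α) (i : α), GoodES f (K+1) s → s.card ≤ N → T ⊆ s → T.card = K →
    (∀ j ∈ T, ∀ l ∈ s, l ∉ T → f l ≤ f j) → i ∈ s → i ∉ T →
    (1/(8*((N:ℝ)+1)^2))^K * ∏ j ∈ T, f j ≤ ES f K (s.erase i) := by
  intro K
  induction K with
  | zero =>
    intro s T i _ _ _ hcard _ _ _
    rw [Finset.card_eq_zero.1 hcard, Finset.prod_empty, ES_zero, pow_zero, mul_one]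
  | succ K ihK =>
    intro s T i hgood hsN hTs hcard hmin his hiT
    set η : ℝ := 1/(8*((N:ℝ)+1)^2) with hη
    have hηpos : 0 < η := by rw [hη]; positivity
    have hN1 : (1:ℝ) ≤ ((N:ℝ)+1) := by
      have : (0:ℝ) ≤ (N:ℝ) := Nat.cast_nonneg N
      linarith
    have hη8 : η ≤ 1/8 := by
      rw [hη, div_le_div_iff₀ (by positivity) (by norm_num)]
      nlinarith
    have hT0 : ∀ j ∈ T, 0 ≤ f j := nonneg_head hgood hTs (by omega) hmin
    have hprodT : 0 ≤ ∏ j ∈ T, f j := Finset.prod_nonneg hT0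
    rcases le_or_gt (f i) 0 with hfi | hfi
    · -- case α : delete i, apply master
      have hgood' : GoodES f (K+2) (s.erase i) := goodES_erase_of_nonpos his hfi hgood
      have hm := master (K+1) (s.erase i) T hgood' (Finset.subset_erase.2 ⟨hTs, hiT⟩) hcard hT0
      have hle1 : η^(K+1) ≤ 1 := pow_le_one₀ (le_of_lt hηpos) (by linarith)
      nlinarith [hm, hprodT, hle1]
    · -- case β : f i > 0
      obtain ⟨j₀, hj₀⟩ : T.Nonempty := Finset.card_pos.1 (by omega)
      have hj₀s : j₀ ∈ s := hTs hj₀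
      have hij₀ : i ≠ j₀ := fun h => hiT (h ▸ hj₀)
      set a : ℝ := f j₀ with hadef
      set x : ℝ := f i with hxdef
      have hax : x ≤ a := hmin j₀ hj₀ i his hiT
      have hapos : 0 < a := lt_of_lt_of_le hfi hax
      set s₁ := s.erase j₀ with hs₁
      set ρ := s₁.erase i with hρdef
      have his₁ : i ∈ s₁ := Finset.mem_erase.2 ⟨hij₀, his⟩
      have hj₀i : j₀ ∈ s.erase i := Finset.mem_erase.2 ⟨fun h => hij₀ h.symm, hj₀s⟩
      have hcomm : (s.erase i).erase j₀ = ρ := by rw [hρdef, hs₁, Finset.erase_right_comm]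
      have hgood₁ : GoodES f (K+1) s₁ := goodES_erase (K+1) s j₀ hj₀s hgood
      have hIH := ihK s₁ (T.erase j₀) i hgood₁
        (le_trans (Finset.card_le_card (Finset.erase_subset j₀ s)) hsN)
        (Finset.erase_subset_erase j₀ hTs)
        (by rw [Finset.card_erase_of_mem hj₀, hcard]; omega)
        (by
          intro j hj l hl hlT'
          have hjT : j ∈ T := Finset.mem_of_mem_erase hj
          have hls : l ∈ s := Finset.mem_of_mem_erase hl
          have hlj₀ : l ≠ j₀ := Finset.ne_of_mem_erase hl
          have hlT : l ∉ T := fun hmem => hlT' (Finset.mem_erase.2 ⟨hlj₀, hmem⟩)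
          exact hmin j hjT l hls hlT)
        his₁ (fun hmem => hiT (Finset.mem_of_mem_erase hmem))
      set V : ℝ := ES f K ρ with hVdef
      set U : ℝ := ES f (K+1) ρ with hUdef
      have hW : ES f (K+1) (s.erase i) = U + a * V := by
        rw [ES_erase f K hj₀i, hcomm]
      have hW0 : 0 ≤ ES f (K+1) (s.erase i) :=
        goodES_nonneg (goodES_erase (K+1) s i his hgood) (le_refl (K+1))
      have hVnn : 0 ≤ V := goodES_nonneg (goodES_erase K s₁ i his₁ hgood₁) (le_refl K)
      set u₀ : ℝ := 1 - η with hu₀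
      rcases le_or_gt (-(u₀*(a*V))) U with hcase | hcase
      · -- main case
        have h1 : η*(a*V) ≤ ES f (K+1) (s.erase i) := by
          rw [hW, hu₀] at *
          nlinarith [hcase]
        have h2 : η*a*(η^K * ∏ j ∈ T.erase j₀, f j) ≤ η*a*V :=
          mul_le_mul_of_nonneg_left hIH (by positivity)
        have h3 : ∏ j ∈ T, f j = a * ∏ j ∈ T.erase j₀, f j := (Finset.mul_prod_erase T f hj₀).symm
        calc η^(K+1) * ∏ j ∈ T, f j = η*a*(η^K * ∏ j ∈ T.erase j₀, f j) := by rw [h3]; ring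
          _ ≤ η*a*V := h2
          _ = η*(a*V) := by ring
          _ ≤ ES f (K+1) (s.erase i) := h1
      · -- contradiction case
        exfalso
        have hu₀half : 1/2 < u₀ := by rw [hu₀]; linarith
        have haV : 0 < a*V := by nlinarith [hW0, hW, hcase]
        have hVpos : 0 < V := by nlinarith
        have hU0 : U < 0 := by nlinarith
        have hEK2 : 0 ≤ ES f (K+2) s := hgood (K+2) (by omega) (le_refl _)
        have hexp : ES f (K+2) s = ES f (K+2) ρ + x*U + a*U + a*x*V := by
          have e1 : ES f (K+2) s = ES f (K+2) s₁ + a * ES f (K+1) s₁ := ES_erase f (K+1) hj₀s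
          have e2 : ES f (K+2) s₁ = ES f (K+2) ρ + x * ES f (K+1) ρ := ES_erase f (K+1) his₁
          have e3 : ES f (K+1) s₁ = ES f (K+1) ρ + x * ES f K ρ := ES_erase f K his₁
          rw [e1, e2, e3]; ring
        have hEρ : (2*u₀ - 1)*(a^2*V) ≤ ES f (K+2) ρ := by
          have hax2 : 0 < a + x := by linarith
          have hint1 : (a+x)*(-(u₀*(a*V))) ≥ (a+x)*U := by nlinarith [hcase]
          have hint2 : 0 ≤ (a-x)*((1-u₀)*(a*V)) := by
            apply mul_nonneg (by linarith)
            apply mul_nonneg (by rw [hu₀]; linarith) (le_of_lt haV)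
          nlinarith [hexp, hEK2, hint1, hint2]
        have h2u : 0 < 2*u₀ - 1 := by linarith
        have hEρpos : 0 < ES f (K+2) ρ :=
          lt_of_lt_of_le (mul_pos h2u (mul_pos (pow_pos hapos 2) hVpos)) hEρ
        have hcardρ : K + 2 ≤ ρ.card := by
          by_contra hc; push_neg at hc
          rw [ES_of_card_lt f hc] at hEρpos; exact lt_irrefl 0 hEρpos
        have hρN : ρ.card ≤ N := by
          refine le_trans (Finset.card_le_card ?_) hsN
          exact le_trans (Finset.erase_subset i s₁) (Finset.erase_subset j₀ s)
        have hnewton := newton_ES f ρ K hcardρ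
        have hUb : U^2 ≤ (a*V)^2 := by nlinarith [hW0, hW]
        have hVEρ : (2*u₀-1)*(a*V)^2 ≤ V * ES f (K+2) ρ := by
          nlinarith [mul_le_mul_of_nonneg_left hEρ (le_of_lt hVpos)]
        have hADnn : (0:ℝ) ≤ (ρ.card.choose K : ℝ) * (ρ.card.choose (K+2) : ℝ) := by positivity
        have hchain : (2*u₀-1) * ((ρ.card.choose (K+1) : ℝ))^2 * (a*V)^2
            ≤ ((ρ.card.choose K : ℝ) * (ρ.card.choose (K+2) : ℝ)) * (a*V)^2 := by
          calc (2*u₀-1) * ((ρ.card.choose (K+1) : ℝ))^2 * (a*V)^2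
              = ((ρ.card.choose (K+1) : ℝ))^2 * ((2*u₀-1)*(a*V)^2) := by ring
            _ ≤ ((ρ.card.choose (K+1) : ℝ))^2 * (V * ES f (K+2) ρ) :=
                mul_le_mul_of_nonneg_left hVEρ (by positivity)
            _ = ((ρ.card.choose (K+1) : ℝ))^2 * (ES f K ρ * ES f (K+2) ρ) := by rw [hVdef]
            _ ≤ ((ρ.card.choose K : ℝ) * (ρ.card.choose (K+2) : ℝ)) * U^2 := hnewton
            _ ≤ ((ρ.card.choose K : ℝ) * (ρ.card.choose (K+2) : ℝ)) * (a*V)^2 :=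
                mul_le_mul_of_nonneg_left hUb hADnn
        have hfinal : (2*u₀-1) * ((ρ.card.choose (K+1) : ℝ))^2
            ≤ (ρ.card.choose K : ℝ) * (ρ.card.choose (K+2) : ℝ) :=
          le_of_mul_le_mul_right hchain (by positivity)
        have hnum := num_bound hcardρ hρN
        have hQ : (2*u₀-1)*(4*((N:ℝ)+1)^2) = 4*((N:ℝ)+1)^2 - 1 := by
          rw [hu₀, hη]; field_simp; ring
        have hmul := mul_le_mul_of_nonneg_right hfinal
          (show (0:ℝ) ≤ 4*((N:ℝ)+1)^2 by positivity)
        nlinarith [hmul, hnum, hQ]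

end Cone2


lemma card_filter_lt_fin (n K : ℕ) (h : K ≤ n) :
    ((Finset.univ : Finset (Fin n)).filter (fun j : Fin n => (j:ℕ) < K)).card = K := by
  have himg : (((Finset.univ : Finset (Fin n)).filter (fun j : Fin n => (j:ℕ) < K)).image Fin.val)
      = Finset.range K := by
    ext a
    simp only [Finset.mem_image, Finset.mem_filter, Finset.mem_univ, true_and, Finset.mem_range]
    constructor
    · rintro ⟨j, hj, rfl⟩; exact hj
    · intro ha; exact ⟨⟨a, lt_of_lt_of_le ha h⟩, ha, rfl⟩
  have hc := congrArg Finset.card himg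
  rwa [Finset.card_image_of_injective _ Fin.val_injective, Finset.card_range] at hc



/-- For `1 ≤ k ≤ n` there is `θ = θ(n,k) > 0` such that for every `lam` in the
closure of `Γ_k` with decreasing entries and every (1-based) index `i ≥ k`,
`S_{k−1}(lam|i) ≥ θ · lam_1 ⋯ lam_{k−1}` (the product over the first `k−1` entries,
interpreted as `1` when `k = 1`). -/
theorem esymmSdel_ge_prod (n k : ℕ) (hk1 : 1 ≤ k) (hkn : k ≤ n) :
    ∃ θ : ℝ, 0 < θ ∧
      ∀ lam : Fin n → ℝ, lam ∈ GammaConeBar n k → Antitone lam →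
        ∀ i : Fin n, k ≤ (i : ℕ) + 1 →
          esymmSdel n (k - 1) lam i ≥
            θ * ∏ j ∈ Finset.univ.filter (fun j : Fin n => (j : ℕ) < k - 1), lam j := by
  obtain ⟨K, rfl⟩ : ∃ K, k = K + 1 := ⟨k - 1, by omega⟩
  refine ⟨(1/(8*((n:ℝ)+1)^2))^K, by positivity, ?_⟩
  intro lam hlam hanti i hik
  have hgood : GoodES lam (K+1) Finset.univ := fun m h1 h2 => hlam m h1 h2
  set T := (Finset.univ : Finset (Fin n)).filter (fun j : Fin n => (j:ℕ) < K) with hT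
  have hTcard : T.card = K := card_filter_lt_fin n K (by omega)
  have hiT : i ∉ T := by
    rw [hT, Finset.mem_filter]
    rintro ⟨-, hlt⟩
    omega
  have hmin : ∀ j ∈ T, ∀ l ∈ (Finset.univ : Finset (Fin n)), l ∉ T → lam l ≤ lam j := by
    intro j hj l _ hlT
    have hjK : (j:ℕ) < K := (Finset.mem_filter.1 hj).2
    have hlK : ¬((l:ℕ) < K) := fun hc => hlT (Finset.mem_filter.2 ⟨Finset.mem_univ l, hc⟩)
    exact hanti (by rw [Fin.le_def]; omega)
  have hmain := main_lemma n K Finset.univ T i hgood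
      (by rw [Finset.card_univ, Fintype.card_fin]) (Finset.filter_subset _ _) hTcard hmin
      (Finset.mem_univ i) hiT
  have hKK : K + 1 - 1 = K := rfl
  rw [hKK]
  exact hmain
end
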